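/- arXiv:1603.09287 — 10 statements merged into one kernel-verified Lean document; each statement's English description precedes it below -/
import Mathlib

section
/- For every integer m and every complex number u with u ∉ ℤ, one has 2^{1-u} · π · Γ(u) / ( Γ((1+u)/2 + m) · Γ((1+u)/2 - m) ) = (-1)^m · √π · Γ(u/2) · Γ((1-u)/2 + |m|) / ( Γ((1-u)/2) · Γ((1+u)/2 + |m|) ). -/
lemma aux_gamma_refl (s : ℂ) (hs : ∀ k : ℤ, s ≠ (k : ℂ)) (n : ℕ) :
    Complex.Gamma (s - n) * Complex.Gamma (1 - s + n)
      = (-1) ^ n * (Complex.Gamma s * Complex.Gamma (1 - s)) := by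
  induction n with
  | zero => simp
  | succ n ih =>
    have h1 : (1 - s + n : ℂ) ≠ 0 := by
      intro h
      exact hs (n + 1) (by push_cast; linear_combination -h)
    have h2 : (s - ((n : ℂ) + 1) : ℂ) ≠ 0 := by
      intro h
      exact hs (n + 1) (by push_cast; linear_combination h)
    have e1 : Complex.Gamma (1 - s + ((n : ℂ) + 1))
        = (1 - s + n) * Complex.Gamma (1 - s + n) := by
      rw [show 1 - s + ((n : ℂ) + 1) = (1 - s + n) + 1 by ring, Complex.Gamma_add_one _ h1]
    have e2 : Complex.Gamma (s - (n : ℂ)) = (s - ((n : ℂ) + 1)) * Complex.Gamma (s - ((n : ℂ) + 1)) := by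
      rw [← Complex.Gamma_add_one _ h2]
      ring_nf
    have ih' : (s - ((n : ℂ) + 1)) * Complex.Gamma (s - ((n : ℂ) + 1)) * Complex.Gamma (1 - s + n)
        = (-1) ^ n * (Complex.Gamma s * Complex.Gamma (1 - s)) := by
      rw [← e2]; exact ih
    push_cast
    rw [e1]
    linear_combination -ih'

lemma even_case (n : ℕ) (u : ℂ) (hu : ∀ k : ℤ, u ≠ (k : ℂ)) :
    (2 : ℂ) ^ (1 - u) * (Real.pi : ℂ) * Complex.Gamma u /
        (Complex.Gamma ((1 + u) / 2 + n) * Complex.Gamma ((1 + u) / 2 - n))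
      = (-1 : ℂ) ^ n * (Real.sqrt Real.pi : ℂ) *
          (Complex.Gamma (u / 2) * Complex.Gamma ((1 - u) / 2 + n) /
            (Complex.Gamma ((1 - u) / 2) * Complex.Gamma ((1 + u) / 2 + n))) := by
  have hG : ∀ r : ℂ, (∀ j : ℤ, r ≠ (j : ℂ)) → Complex.Gamma r ≠ 0 := by
    intro r hr
    refine Complex.Gamma_ne_zero fun k => ?_
    have := hr (-(k : ℤ))
    push_cast at this
    exact this
  have hs : ∀ k : ℤ, (1 + u) / 2 ≠ (k : ℂ) := by
    intro k h
    exact hu (2 * k - 1) (by push_cast; linear_combination 2 * h)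
  have h1 : Complex.Gamma ((1 + u) / 2 + n) ≠ 0 := by
    refine hG _ fun j h => hu (2 * j - 2 * n - 1) ?_
    push_cast; linear_combination 2 * h
  have h2 : Complex.Gamma ((1 + u) / 2 - n) ≠ 0 := by
    refine hG _ fun j h => hu (2 * j + 2 * n - 1) ?_
    push_cast; linear_combination 2 * h
  have h3 : Complex.Gamma ((1 - u) / 2) ≠ 0 := by
    refine hG _ fun j h => hu (1 - 2 * j) ?_
    push_cast; linear_combination -2 * h
  have hπ : (Real.sqrt Real.pi : ℂ) ≠ 0 := by
    exact_mod_cast (Real.sqrt_pos.mpr Real.pi_pos).ne'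
  have hsq : (Real.sqrt Real.pi : ℂ) * (Real.sqrt Real.pi : ℂ) = (Real.pi : ℂ) := by
    norm_cast
    exact Real.mul_self_sqrt Real.pi_pos.le
  have dup : Complex.Gamma (u / 2) * Complex.Gamma ((1 + u) / 2)
      = Complex.Gamma u * 2 ^ (1 - u) * (Real.sqrt Real.pi : ℂ) := by
    have h := Complex.Gamma_mul_Gamma_add_half (u / 2)
    rw [show 2 * (u / 2) = u by ring, show u / 2 + 1 / 2 = (1 + u) / 2 by ring] at h
    exact h
  have key := aux_gamma_refl ((1 + u) / 2) hs n
  rw [show (1 : ℂ) - (1 + u) / 2 = (1 - u) / 2 by ring] at key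
  have hε : ((-1 : ℂ) ^ n) * ((-1 : ℂ) ^ n) = 1 := by
    rw [← mul_pow]; norm_num
  rw [← mul_div_assoc, div_eq_div_iff (mul_ne_zero h1 h2) (mul_ne_zero h3 h1)]
  linear_combination
    (-( (-1:ℂ)^n * (Real.sqrt Real.pi : ℂ) * Complex.Gamma (u/2) * Complex.Gamma ((1+u)/2 + n))) * key
    + (-( (-1:ℂ)^n * (-1:ℂ)^n * (Real.sqrt Real.pi : ℂ) * Complex.Gamma ((1-u)/2) * Complex.Gamma ((1+u)/2 + n))) * dup
    + (-( (2:ℂ)^(1-u) * Complex.Gamma u * Complex.Gamma ((1-u)/2) * Complex.Gamma ((1+u)/2 + n) * (-1:ℂ)^n * (-1:ℂ)^n)) * hsq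
    + (-( (2:ℂ)^(1-u) * Complex.Gamma u * Complex.Gamma ((1-u)/2) * Complex.Gamma ((1+u)/2 + n) * (Real.pi:ℂ))) * hε

/-- The even-index case: `𝒲_{2m}(0,u)` Gamma-evaluation identity, valid for `u ∉ ℤ`. -/
theorem stmt_2 (m : ℤ) (u : ℂ) (hu : ∀ n : ℤ, u ≠ (n : ℂ)) :
    (2 : ℂ) ^ (1 - u) * (Real.pi : ℂ) * Complex.Gamma u /
        (Complex.Gamma ((1 + u) / 2 + (m : ℂ)) * Complex.Gamma ((1 + u) / 2 - (m : ℂ)))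
      = (-1 : ℂ) ^ m * (Real.sqrt Real.pi : ℂ) *
          (Complex.Gamma (u / 2) * Complex.Gamma ((1 - u) / 2 + ((|m| : ℤ) : ℂ)) /
            (Complex.Gamma ((1 - u) / 2) * Complex.Gamma ((1 + u) / 2 + ((|m| : ℤ) : ℂ)))) := by
  obtain ⟨n, hn⟩ : ∃ n : ℕ, m = n ∨ m = -n := ⟨m.natAbs, Int.natAbs_eq m⟩
  rcases hn with h | h
  · rw [h, show |(n : ℤ)| = (n : ℤ) by simp]
    push_cast
    exact even_case n u hu
  · rw [h, show |(-(n : ℤ))| = (n : ℤ) by simp]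
    push_cast
    have hinv : (-1 : ℂ) ^ (-(n : ℤ)) = (-1 : ℂ) ^ n := by
      rw [zpow_neg, zpow_natCast, ← inv_pow, inv_neg, inv_one]
    rw [hinv,
      show (1 + u) / 2 + -(n : ℂ) = (1 + u) / 2 - n from by ring,
      show (1 + u) / 2 - -(n : ℂ) = (1 + u) / 2 + n from by ring,
      mul_comm (Complex.Gamma ((1 + u) / 2 - n)) (Complex.Gamma ((1 + u) / 2 + n))]
    exact even_case n u hu
end

section
/- For every integer m ≥ 0 and all complex numbers a, b with Re(a) > 0 and Re(b) > 0, the integral ∫_0^∞ x^{a-1} (1+x²)^{-(a+b)/2} · [ ((1+ix)/√(1+x²))^{-m} + ((1-ix)/√(1+x²))^{-m} ] dx converges absolutely and equals Σ_{j=0}^{⌊m/2⌋} C(m,2j) · (-1)^j · Γ(a/2 + j) · Γ((m+b)/2 - j) / Γ((m+a+b)/2), where C(m,k) is the binomial coefficient. -/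
/-!
Put `w = (1 + i x) / √(1 + x²)`. Since `w · w̄ = 1`, we get `w^{-m} + w̄^{-m} = w̄^m + w^m`,
which equals `((1 + i x)^m + (1 - i x)^m) (1 + x²)^{-m/2}`; only the even binomial terms
survive, and they contribute `2 C(m,2j) (-1)^j x^{2j}`. The integrand thus splits into finitely
many terms `x^{2α-1} (1 + x²)^{-(α+β)}` with `α = a/2 + j`, `β = (m+b)/2 - j`, and the
substitution `t = x² / (1 + x²)` turns each of their integrals into `B(α, β) / 2`.
-/

open MeasureTheory Set Complex

theorem add_pow_add_sub_pow_eq_sum {R : Type*} [CommRing R] (m : ℕ) (z : R) :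
    (1 + z) ^ m + (1 - z) ^ m
      = ∑ j ∈ Finset.range (m / 2 + 1), 2 * (m.choose (2 * j) : R) * z ^ (2 * j) := by
  have hterm (k : ℕ) : z ^ k * (m.choose k : R) + (-z) ^ k * m.choose k
      = if Even k then 2 * (m.choose k : R) * z ^ k else 0 := by
    rcases Nat.even_or_odd k with hk | hk
    · rw [if_pos hk, hk.neg_pow]; ring
    · rw [if_neg (Nat.not_even_iff_odd.mpr hk), hk.neg_pow]; ring
  have hevens : (Finset.range (m + 1)).filter Even
      = (Finset.range (m / 2 + 1)).map ⟨(2 * ·), mul_right_injective₀ two_ne_zero⟩ := by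
    ext k
    simp only [Finset.mem_filter, Finset.mem_range, Finset.mem_map, Function.Embedding.coeFn_mk,
      Nat.even_iff]
    constructor
    · rintro ⟨hk, hk2⟩
      exact ⟨k / 2, by omega, by omega⟩
    · rintro ⟨j, hj, rfl⟩
      omega
  rw [add_comm 1 z, sub_eq_add_neg, add_comm 1 (-z), add_pow, add_pow, ← Finset.sum_add_distrib]
  simp only [one_pow, mul_one, hterm]
  rw [← Finset.sum_filter, hevens, Finset.sum_map]
  rfl

theorem ofReal_sq_cpow {x : ℝ} (hx : 0 ≤ x) (z : ℂ) :
    ((x ^ 2 : ℝ) : ℂ) ^ z = (x : ℂ) ^ (2 * z) := by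
  rw [show (2 : ℂ) = ((2 : ℝ) : ℂ) by norm_num, cpow_mul_ofReal_nonneg hx, Real.rpow_two]

theorem hasDerivAt_sq_div_one_add_sq (x : ℝ) :
    HasDerivAt (fun x : ℝ => x ^ 2 / (1 + x ^ 2)) (2 * x / (1 + x ^ 2) ^ 2) x := by
  have hsq : HasDerivAt (fun x : ℝ => x ^ 2) (2 * x) x := by simpa using hasDerivAt_pow 2 x
  exact (hsq.div (hsq.const_add 1) (by positivity)).congr_deriv (by ring)

theorem injOn_sq_div_one_add_sq : InjOn (fun x : ℝ => x ^ 2 / (1 + x ^ 2)) (Ioi 0) := by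
  intro x hx y hy hxy
  rw [div_eq_div_iff (by positivity) (by positivity)] at hxy
  nlinarith [mem_Ioi.mp hx, mem_Ioi.mp hy]

theorem image_sq_div_one_add_sq_Ioi : (fun x : ℝ => x ^ 2 / (1 + x ^ 2)) '' Ioi 0 = Ioo 0 1 := by
  ext y
  constructor
  · rintro ⟨x, hx, rfl⟩
    have hx : 0 < x := hx
    exact ⟨by positivity, (div_lt_one (by positivity)).mpr (by linarith)⟩
  · rintro ⟨hy0, hy1⟩
    have hpos : 0 < y / (1 - y) := div_pos hy0 (by linarith)
    refine ⟨√(y / (1 - y)), Real.sqrt_pos.mpr hpos, ?_⟩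
    have h1y : 1 - y ≠ 0 := by linarith
    simp only [Real.sq_sqrt hpos.le]
    field_simp
    ring

noncomputable def betaIntegrand (α β : ℂ) (y : ℝ) : ℂ :=
  (y : ℂ) ^ (α - 1) * (1 - (y : ℂ)) ^ (β - 1)

noncomputable def halfBetaIntegrand (α β : ℂ) (x : ℝ) : ℂ :=
  (x : ℂ) ^ (2 * α - 1) * (1 + (x : ℂ) ^ 2) ^ (-(α + β))

theorem abs_deriv_smul_betaIntegrand_sq_div_one_add_sq {α β : ℂ} {x : ℝ} (hx : 0 < x) :
    |2 * x / (1 + x ^ 2) ^ 2| • betaIntegrand α β (x ^ 2 / (1 + x ^ 2))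
      = 2 * halfBetaIntegrand α β x := by
  have hc : 0 < 1 + x ^ 2 := by positivity
  have hcne : 1 + (x : ℂ) ^ 2 ≠ 0 := by exact_mod_cast hc.ne'
  have hxne : (x : ℂ) ≠ 0 := ofReal_ne_zero.mpr hx.ne'
  have hleft : ((x ^ 2 / (1 + x ^ 2) : ℝ) : ℂ) ^ (α - 1)
      = (x : ℂ) ^ (2 * α - 2) * (1 + (x : ℂ) ^ 2) ^ (1 - α) := by
    rw [div_eq_mul_inv, ofReal_mul, mul_cpow_ofReal_nonneg (by positivity) (by positivity),
      ofReal_sq_cpow hx.le, ofReal_inv, inv_cpow_ofReal_nonneg hc.le, ← cpow_neg]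
    push_cast
    ring_nf
  have hright :
      (1 - ((x ^ 2 / (1 + x ^ 2) : ℝ) : ℂ)) ^ (β - 1) = (1 + (x : ℂ) ^ 2) ^ (1 - β) := by
    rw [← ofReal_one, ← ofReal_sub,
      show 1 - x ^ 2 / (1 + x ^ 2) = (1 + x ^ 2)⁻¹ by field_simp; ring,
      ofReal_inv, inv_cpow_ofReal_nonneg hc.le, ← cpow_neg]
    push_cast
    ring_nf
  have hjac :
      ((|2 * x / (1 + x ^ 2) ^ 2| : ℝ) : ℂ) = 2 * x * (1 + (x : ℂ) ^ 2) ^ (-2 : ℂ) := by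
    rw [abs_of_pos (by positivity), cpow_neg, show (2 : ℂ) = (2 : ℕ) by norm_num, cpow_natCast]
    push_cast
    ring
  rw [betaIntegrand, halfBetaIntegrand, real_smul, hleft, hright, hjac,
    show 2 * α - 1 = 2 * α - 2 + 1 by ring, show -(α + β) = -2 + (1 - α) + (1 - β) by ring,
    cpow_add _ _ hxne, cpow_one, cpow_add _ _ hcne, cpow_add _ _ hcne]
  ring

theorem abs_deriv_smul_betaIntegrand_ae_eq {α β : ℂ} :
    (fun x : ℝ => |2 * x / (1 + x ^ 2) ^ 2| • betaIntegrand α β (x ^ 2 / (1 + x ^ 2)))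
      =ᵐ[volume.restrict (Ioi 0)] fun x => 2 * halfBetaIntegrand α β x :=
  (ae_restrict_iff' measurableSet_Ioi).mpr
    (ae_of_all _ fun _ hx => abs_deriv_smul_betaIntegrand_sq_div_one_add_sq hx)

theorem integrableOn_halfBetaIntegrand {α β : ℂ} (hα : 0 < α.re) (hβ : 0 < β.re) :
    IntegrableOn (halfBetaIntegrand α β) (Ioi 0) := by
  have hbeta : IntegrableOn (betaIntegrand α β) (Ioo 0 1) :=
    (betaIntegral_convergent hα hβ).1.mono_set Ioo_subset_Ioc_self
  rw [← image_sq_div_one_add_sq_Ioi, integrableOn_image_iff_integrableOn_abs_deriv_smul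
    measurableSet_Ioi (fun x _ => (hasDerivAt_sq_div_one_add_sq x).hasDerivWithinAt)
    injOn_sq_div_one_add_sq] at hbeta
  have := (hbeta.congr abs_deriv_smul_betaIntegrand_ae_eq).const_mul (2⁻¹ : ℂ)
  simp only [inv_mul_cancel_left₀ (two_ne_zero (α := ℂ))] at this
  exact this

theorem integral_halfBetaIntegrand {α β : ℂ} (hα : 0 < α.re) (hβ : 0 < β.re) :
    ∫ x in Ioi (0 : ℝ), halfBetaIntegrand α β x
      = Gamma α * Gamma β / (2 * Gamma (α + β)) := by
  have hbeta : betaIntegral α β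
      = ∫ x in Ioi (0 : ℝ),
          |2 * x / (1 + x ^ 2) ^ 2| • betaIntegrand α β (x ^ 2 / (1 + x ^ 2)) := by
    rw [betaIntegral, intervalIntegral.integral_of_le zero_le_one, integral_Ioc_eq_integral_Ioo,
      ← image_sq_div_one_add_sq_Ioi]
    exact integral_image_eq_integral_abs_deriv_smul measurableSet_Ioi
      (fun x _ => (hasDerivAt_sq_div_one_add_sq x).hasDerivWithinAt) injOn_sq_div_one_add_sq _
  rw [integral_congr_ae abs_deriv_smul_betaIntegrand_ae_eq, integral_const_mul,
    betaIntegral_eq_Gamma_mul_div α β hα hβ] at hbeta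
  rw [mul_comm 2, ← div_div, hbeta, mul_div_cancel_left₀ _ two_ne_zero]

theorem cpow_neg_natCast_add_cpow_neg_natCast_eq_sum (m : ℕ) (x : ℝ) :
    ((1 + I * x) / (√(1 + x ^ 2) : ℂ)) ^ (-(m : ℂ))
        + ((1 - I * x) / (√(1 + x ^ 2) : ℂ)) ^ (-(m : ℂ))
      = (∑ j ∈ Finset.range (m / 2 + 1),
          2 * (m.choose (2 * j) : ℂ) * (-1) ^ j * (x : ℂ) ^ (2 * j))
        * (1 + (x : ℂ) ^ 2) ^ (-((m : ℂ) / 2)) := by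
  set s := √(1 + x ^ 2)
  have hs : (s : ℂ) ^ 2 = 1 + (x : ℂ) ^ 2 := by
    rw [← ofReal_pow, Real.sq_sqrt (by positivity)]; push_cast; ring
  have hsm : ((s : ℂ) ^ m)⁻¹ = (1 + (x : ℂ) ^ 2) ^ (-((m : ℂ) / 2)) := by
    rw [← hs, ← ofReal_pow s 2, ofReal_sq_cpow (Real.sqrt_nonneg _),
      show 2 * -((m : ℂ) / 2) = -m by ring, cpow_neg, cpow_natCast]
  have hconj : (1 + I * x) / (s : ℂ) * ((1 - I * x) / s) = 1 := by
    have hsne : (s : ℂ) ≠ 0 := ofReal_ne_zero.mpr (Real.sqrt_pos.mpr (by positivity)).ne'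
    rw [div_mul_div_comm, div_eq_one_iff_eq (mul_ne_zero hsne hsne), ← sq, hs]
    linear_combination (-(x : ℂ) ^ 2) * I_sq
  have hinv {w w' : ℂ} (h : w * w' = 1) : w ^ (-(m : ℂ)) = w' ^ m := by
    rw [cpow_neg, cpow_natCast, inv_eq_of_mul_eq_one_right (by rw [← mul_pow, h, one_pow])]
  rw [hinv hconj, hinv ((mul_comm _ _).trans hconj), div_pow, div_pow, ← add_div, add_comm,
    add_pow_add_sub_pow_eq_sum, div_eq_mul_inv, hsm]
  congr 1
  refine Finset.sum_congr rfl fun j _ => ?_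
  rw [pow_mul, mul_pow, I_sq, mul_pow, ← pow_mul]
  ring

noncomputable def generalizedBetaIntegrand (m : ℕ) (a b : ℂ) (x : ℝ) : ℂ :=
  (x : ℂ) ^ (a - 1) * (1 + (x : ℂ) ^ 2) ^ (-(a + b) / 2) *
    (((1 + I * x) / (√(1 + x ^ 2) : ℂ)) ^ (-(m : ℂ))
      + ((1 - I * x) / (√(1 + x ^ 2) : ℂ)) ^ (-(m : ℂ)))

theorem generalizedBetaIntegrand_eq_sum (m : ℕ) (a b : ℂ) {x : ℝ} (hx : x ≠ 0) :
    generalizedBetaIntegrand m a b x = ∑ j ∈ Finset.range (m / 2 + 1),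
      2 * (m.choose (2 * j) : ℂ) * (-1) ^ j *
        halfBetaIntegrand (a / 2 + j) ((m + b) / 2 - j) x := by
  have hxne : (x : ℂ) ≠ 0 := ofReal_ne_zero.mpr hx
  have hcne : 1 + (x : ℂ) ^ 2 ≠ 0 := by exact_mod_cast (by positivity : (0 : ℝ) < 1 + x ^ 2).ne'
  simp only [generalizedBetaIntegrand, cpow_neg_natCast_add_cpow_neg_natCast_eq_sum,
    Finset.mul_sum, Finset.sum_mul, halfBetaIntegrand]
  refine Finset.sum_congr rfl fun j _ => ?_
  rw [show 2 * (a / 2 + j) - 1 = a - 1 + (2 * j : ℕ) by push_cast; ring,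
    show -(a / 2 + j + ((m + b) / 2 - j)) = -(a + b) / 2 + -((m : ℂ) / 2) by ring,
    cpow_add _ _ hxne, cpow_add _ _ hcne, cpow_natCast]
  ring

theorem re_pos_of_mem_range_half {m j : ℕ} (hj : j ∈ Finset.range (m / 2 + 1)) {a b : ℂ}
    (ha : 0 < a.re) (hb : 0 < b.re) : 0 < (a / 2 + j).re ∧ 0 < (((m : ℂ) + b) / 2 - j).re := by
  have : 2 * (j : ℝ) ≤ m := by
    norm_cast; have := Finset.mem_range.mp hj; omega
  simp only [add_re, sub_re, div_ofNat_re, natCast_re]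
  constructor <;> linarith

/-- The generalized beta function `𝓑_{+1,m}(a,b)`: absolute convergence and explicit
evaluation as a finite sum of Gamma quotients, for `Re a > 0`, `Re b > 0`. -/
theorem stmt_3 (m : ℕ) (a b : ℂ) (ha : 0 < a.re) (hb : 0 < b.re) :
    IntegrableOn (fun x : ℝ =>
      (x : ℂ) ^ (a - 1) * (1 + (x : ℂ) ^ 2) ^ (-(a + b) / 2) *
        (((1 + Complex.I * (x : ℂ)) / (Real.sqrt (1 + x ^ 2) : ℂ)) ^ (-(m : ℂ)) +
          ((1 - Complex.I * (x : ℂ)) / (Real.sqrt (1 + x ^ 2) : ℂ)) ^ (-(m : ℂ))))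
      (Set.Ioi 0) ∧
    (∫ x in Set.Ioi (0 : ℝ),
        (x : ℂ) ^ (a - 1) * (1 + (x : ℂ) ^ 2) ^ (-(a + b) / 2) *
          (((1 + Complex.I * (x : ℂ)) / (Real.sqrt (1 + x ^ 2) : ℂ)) ^ (-(m : ℂ)) +
            ((1 - Complex.I * (x : ℂ)) / (Real.sqrt (1 + x ^ 2) : ℂ)) ^ (-(m : ℂ))))
      = ∑ j ∈ Finset.range (m / 2 + 1),
          (Nat.choose m (2 * j) : ℂ) * (-1 : ℂ) ^ j *
            (Complex.Gamma (a / 2 + (j : ℂ)) * Complex.Gamma (((m : ℂ) + b) / 2 - (j : ℂ)) /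
              Complex.Gamma (((m : ℂ) + a + b) / 2)) := by
  have hint : ∀ j ∈ Finset.range (m / 2 + 1), IntegrableOn (fun x => 2 * (m.choose (2 * j) : ℂ) *
      (-1) ^ j * halfBetaIntegrand (a / 2 + j) ((m + b) / 2 - j) x) (Ioi 0) := fun j hj =>
    have hre := re_pos_of_mem_range_half hj ha hb
    (integrableOn_halfBetaIntegrand hre.1 hre.2).const_mul _
  have hdecomp : EqOn (fun x => ∑ j ∈ Finset.range (m / 2 + 1), 2 * (m.choose (2 * j) : ℂ) *
      (-1) ^ j * halfBetaIntegrand (a / 2 + j) ((m + b) / 2 - j) x)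
      (generalizedBetaIntegrand m a b) (Ioi 0) := fun x hx =>
    (generalizedBetaIntegrand_eq_sum m a b (ne_of_gt hx)).symm
  refine ⟨IntegrableOn.congr_fun (integrable_finsetSum _ hint) hdecomp measurableSet_Ioi, ?_⟩
  change ∫ x in Ioi 0, generalizedBetaIntegrand m a b x = _
  rw [← setIntegral_congr_fun measurableSet_Ioi hdecomp, integral_finsetSum _ hint]
  refine Finset.sum_congr rfl fun j hj => ?_
  have hre := re_pos_of_mem_range_half hj ha hb
  rw [integral_const_mul, integral_halfBetaIntegrand hre.1 hre.2,
    show a / 2 + j + ((m + b) / 2 - j) = ((m : ℂ) + a + b) / 2 by ring]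
  ring
end

section
/- Let x be a nonzero real number and c > 0. For each θ with 0 < θ < π/2, the integral I(θ) = (1/2π) · ∫_{-∞}^{∞} (2π|x|)^{-(c+it)} · exp( i·(c+it)·θ·sgn(x) ) · Γ(c+it) dt converges absolutely, and I(θ) tends to exp(2πix) as θ tends to π/2 from below. -/
/-!
With `y = 2π|x| e^{-iθ sgn x}` the integrand is `y^{-s} Γ(s)`, `s = c + it`, and `Re y > 0`.
By analytic continuation from real `y`, `y^{-s} Γ(s)` is the Mellin transform of `u ↦ e^{-yu}`.
Rotating the contour of Euler's integral gives `|Γ(c + it)| ≪ e^{-θ'|t|}` for every `θ' < π/2`,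
so the vertical integral converges absolutely and Mellin inversion at `u = 1` evaluates it as
`e^{-y}`, which is continuous in `θ` and equals `e^{2πix}` at `θ = π/2`.
-/

open MeasureTheory Set Filter Topology Complex

lemma norm_cpow_mul_cexp_neg_mul {t : ℝ} (ht : 0 < t) (s y : ℂ) :
    ‖(t : ℂ) ^ (s - 1) * cexp (-(y * t))‖ = t ^ (s.re - 1) * Real.exp (-(y.re * t)) := by
  simp [norm_cpow_eq_rpow_re_of_pos ht, Complex.norm_exp]

lemma integrableOn_rpow_mul_exp_neg_mul_Ioi {a b : ℝ} (ha : -1 < a) (hb : 0 < b) :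
    IntegrableOn (fun t : ℝ => t ^ a * Real.exp (-(b * t))) (Ioi 0) := by
  simpa using integrableOn_rpow_mul_exp_neg_mul_rpow ha one_pos hb

lemma continuousOn_cpow_mul_cexp_neg_mul (s y : ℂ) :
    ContinuousOn (fun t : ℝ => (t : ℂ) ^ (s - 1) * cexp (-(y * t))) (Ioi 0) :=
  ContinuousOn.mul
    (fun t ht => (continuousAt_ofReal_cpow_const t _ (Or.inr ht.ne')).continuousWithinAt)
    (by fun_prop)

lemma integrableOn_cpow_mul_cexp_neg_mul_Ioi {s y : ℂ} (hs : 0 < s.re) (hy : 0 < y.re) :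
    IntegrableOn (fun t : ℝ => (t : ℂ) ^ (s - 1) * cexp (-(y * t))) (Ioi 0) := by
  refine Integrable.mono' (integrableOn_rpow_mul_exp_neg_mul_Ioi (a := s.re - 1) (by linarith) hy)
    ((continuousOn_cpow_mul_cexp_neg_mul s y).aestronglyMeasurable measurableSet_Ioi) ?_
  filter_upwards [ae_restrict_mem measurableSet_Ioi] with t ht
  exact (norm_cpow_mul_cexp_neg_mul ht s y).le

lemma differentiableOn_integral_cpow_mul_cexp_neg_mul {s : ℂ} (hs : 0 < s.re) :
    DifferentiableOn ℂ (fun y : ℂ => ∫ t in Ioi (0 : ℝ), (t : ℂ) ^ (s - 1) * cexp (-(y * t)))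
      {y | 0 < y.re} := by
  intro y₀ hy₀
  set ε := y₀.re / 2
  have hε : 0 < ε := half_pos hy₀
  have hball : ∀ y ∈ Metric.ball y₀ ε, ε < y.re := fun y hy => by
    have hdist := (abs_re_le_norm (y - y₀)).trans_lt (mem_ball_iff_norm.mp hy)
    rw [sub_re] at hdist
    have : y₀.re = 2 * ε := by ring
    linarith [(abs_lt.mp hdist).1]
  have hderiv := hasDerivAt_integral_of_dominated_loc_of_deriv_le (μ := volume.restrict (Ioi 0))
    (F' := fun y (t : ℝ) => (t : ℂ) ^ (s - 1) * (cexp (-(y * t)) * -t))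
    (bound := fun t => t ^ s.re * Real.exp (-(ε * t))) (Metric.ball_mem_nhds y₀ hε)
    (Eventually.of_forall fun y =>
      (continuousOn_cpow_mul_cexp_neg_mul s y).aestronglyMeasurable measurableSet_Ioi)
    (integrableOn_cpow_mul_cexp_neg_mul_Ioi hs hy₀)
    ((((continuousOn_cpow_mul_cexp_neg_mul s y₀).mul
        (by fun_prop : ContinuousOn (fun t : ℝ => -(t : ℂ)) (Ioi 0))).congr
        fun t _ => (mul_assoc _ _ _).symm).aestronglyMeasurable measurableSet_Ioi)
    ?_ (integrableOn_rpow_mul_exp_neg_mul_Ioi (by linarith) hε) ?_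
  · exact hderiv.2.differentiableAt.differentiableWithinAt
  · filter_upwards [ae_restrict_mem measurableSet_Ioi] with t (ht : 0 < t) y hy
    rw [← mul_assoc, norm_mul, norm_cpow_mul_cexp_neg_mul ht, norm_neg, norm_real,
      Real.norm_of_nonneg ht.le, mul_right_comm, ← Real.rpow_add_one ht.ne', sub_add_cancel]
    have := hball y hy
    gcongr
  · filter_upwards [ae_restrict_mem measurableSet_Ioi] with t ht y hy
    exact ((hasDerivAt_mul_const (t : ℂ)).neg.cexp).const_mul _

/-- Analytic continuation in `y` of `Complex.integral_cpow_mul_exp_neg_mul_Ioi` from `y > 0`. -/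
lemma integral_cpow_mul_cexp_neg_mul_Ioi {s y : ℂ} (hs : 0 < s.re) (hy : 0 < y.re) :
    ∫ t in Ioi (0 : ℝ), (t : ℂ) ^ (s - 1) * cexp (-(y * t)) = y ^ (-s) * Gamma s := by
  have hU : IsOpen {y : ℂ | 0 < y.re} := isOpen_lt continuous_const continuous_re
  have hrhs : DifferentiableOn ℂ (fun y : ℂ => y ^ (-s) * Gamma s) {y | 0 < y.re} :=
    fun y hy => ((differentiableAt_id.cpow_const (Or.inl hy)).mul_const _).differentiableWithinAt
  refine AnalyticOnNhd.eqOn_of_preconnected_of_frequently_eq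
    ((differentiableOn_integral_cpow_mul_cexp_neg_mul hs).analyticOnNhd hU) (hrhs.analyticOnNhd hU)
    (convex_halfSpace_re_gt 0).isPreconnected (by simp : (1 : ℂ) ∈ {y : ℂ | 0 < y.re}) ?_ hy
  have hreal : Tendsto ((↑) : ℝ → ℂ) (𝓝[≠] 1) (𝓝[≠] 1) :=
    continuous_ofReal.continuousWithinAt.tendsto_nhdsWithin fun r hr => by simpa using hr
  refine hreal.frequently (Eventually.frequently ?_)
  filter_upwards [nhdsWithin_le_nhds (lt_mem_nhds one_pos)] with r (hr : 0 < r)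
  rw [integral_cpow_mul_exp_neg_mul_Ioi hs hr, one_div, cpow_neg,
    inv_cpow _ _ (by simp [arg_ofReal_of_nonneg hr.le, Real.pi_ne_zero.symm])]

/-- Rotating the contour: `Γ(s) = e^{iθs} ∫ u^{s-1} e^{-e^{iθ} u} du`, and the integrand has
absolute value `u^{c-1} e^{-u cos θ}`. -/
lemma norm_Gamma_le_mul_exp {c θ : ℝ} (hc : 0 < c) (hθ : |θ| < Real.pi / 2) (t : ℝ) :
    ‖Gamma (c + I * t)‖ ≤ (1 / Real.cos θ) ^ c * Real.Gamma c * Real.exp (-(θ * t)) := by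
  have hcos : 0 < Real.cos θ := Real.cos_pos_of_mem_Ioo (abs_lt.mp hθ)
  set s : ℂ := c + I * t
  set y : ℂ := cexp (θ * I)
  have hy : 0 < y.re := by simpa [y, exp_ofReal_mul_I_re] using hcos
  have hlog : log y = θ * I := log_exp (by simp; linarith [abs_lt.mp hθ, Real.pi_pos])
    (by simp; linarith [abs_lt.mp hθ, Real.pi_pos])
  have hΓ : Gamma s =
      cexp (θ * I * s) * ∫ u in Ioi (0 : ℝ), (u : ℂ) ^ (s - 1) * cexp (-(y * u)) := by
    rw [integral_cpow_mul_cexp_neg_mul_Ioi (by simpa [s] using hc) hy,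
      cpow_def_of_ne_zero (exp_ne_zero _), hlog, ← mul_assoc, ← Complex.exp_add]
    simp
  have hintegral : ‖∫ u in Ioi (0 : ℝ), (u : ℂ) ^ (s - 1) * cexp (-(y * u))‖ ≤
      (1 / Real.cos θ) ^ c * Real.Gamma c := by
    refine (norm_integral_le_integral_norm _).trans_eq ?_
    rw [← Real.integral_rpow_mul_exp_neg_mul_Ioi hc hcos]
    refine setIntegral_congr_fun measurableSet_Ioi fun u hu => ?_
    rw [norm_cpow_mul_cexp_neg_mul hu]
    simp [s, y, exp_ofReal_mul_I_re]
  rw [hΓ, norm_mul, Complex.norm_exp, mul_comm]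
  have : (θ * I * s).re = -(θ * t) := by simp [s]
  rw [this]
  gcongr

lemma norm_Gamma_le_mul_exp_abs {c θ : ℝ} (hc : 0 < c) (hθ : |θ| < Real.pi / 2) (t : ℝ) :
    ‖Gamma (c + I * t)‖ ≤ (1 / Real.cos θ) ^ c * Real.Gamma c * Real.exp (-(θ * |t|)) := by
  rcases le_total 0 t with ht | ht
  · simpa [abs_of_nonneg ht] using norm_Gamma_le_mul_exp hc hθ t
  · simpa [abs_of_nonpos ht] using norm_Gamma_le_mul_exp hc (θ := -θ) (by rwa [abs_neg]) t

lemma integrable_exp_neg_mul_abs {a : ℝ} (ha : 0 < a) :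
    Integrable fun t : ℝ => Real.exp (-(a * |t|)) := by
  have hIoi : IntegrableOn (fun t : ℝ => Real.exp (-(a * |t|))) (Ioi 0) :=
    (exp_neg_integrableOn_Ioi 0 ha).congr_fun (fun t (ht : 0 < t) => by simp [abs_of_pos ht])
      measurableSet_Ioi
  rw [← integrableOn_univ, ← Iio_union_Ici (a := (0 : ℝ)), integrableOn_union,
    integrableOn_Ici_iff_integrableOn_Ioi]
  refine ⟨?_, hIoi⟩
  rw [← (Measure.measurePreserving_neg (volume : Measure ℝ)).integrableOn_comp_preimage
    (Homeomorph.neg ℝ).measurableEmbedding]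
  simpa [Function.comp_def] using hIoi

lemma continuous_Gamma_comp_vertical {c : ℝ} (hc : 0 < c) :
    Continuous fun t : ℝ => Gamma (c + I * t) :=
  continuous_iff_continuousAt.mpr fun t => (continuousAt_Gamma _ fun m h => by
    have := congr_arg re h
    simp at this
    linarith [(m.cast_nonneg : (0 : ℝ) ≤ m)]).comp (by fun_prop)

lemma integrable_cpow_neg_mul_Gamma {y : ℂ} (hy : 0 < y.re) {c : ℝ} (hc : 0 < c) :
    Integrable fun t : ℝ => y ^ (-(c + I * t)) * Gamma (c + I * t) := by
  have hy₀ : y ≠ 0 := fun h => by simp [h] at hy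
  have harg : |arg y| < Real.pi / 2 :=
    abs_lt.mpr ⟨neg_pi_div_two_lt_arg_iff.mpr (Or.inl hy), arg_lt_pi_div_two_iff.mpr (Or.inl hy)⟩
  obtain ⟨θ, hargθ, hθπ⟩ := exists_between harg
  have hθ : |θ| < Real.pi / 2 := by rwa [abs_of_pos ((abs_nonneg _).trans_lt hargθ)]
  have hcos : 0 < Real.cos θ := Real.cos_pos_of_mem_Ioo (abs_lt.mp hθ)
  set C := ‖y‖ ^ (-c) * ((1 / Real.cos θ) ^ c * Real.Gamma c)
  refine ((integrable_exp_neg_mul_abs (sub_pos.mpr hargθ)).const_mul C).mono'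
    (((by fun_prop : Continuous fun t : ℝ => -((c : ℂ) + I * t)).const_cpow (.inl hy₀)).mul
      (continuous_Gamma_comp_vertical hc)).aestronglyMeasurable (Eventually.of_forall fun t => ?_)
  have hexp : Real.exp (arg y * t) * Real.exp (-(θ * |t|)) ≤ Real.exp (-((θ - |arg y|) * |t|)) := by
    rw [← Real.exp_add, Real.exp_le_exp]
    linarith [(le_abs_self (arg y * t)).trans_eq (abs_mul (arg y) t)]
  calc ‖y ^ (-(c + I * t)) * Gamma (c + I * t)‖
      = ‖y‖ ^ (-c) * Real.exp (arg y * t) * ‖Gamma (c + I * t)‖ := by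
        simp [norm_cpow_of_ne_zero hy₀, div_eq_mul_inv, ← Real.exp_neg]
    _ ≤ ‖y‖ ^ (-c) * Real.exp (arg y * t) *
        ((1 / Real.cos θ) ^ c * Real.Gamma c * Real.exp (-(θ * |t|))) := by
        gcongr; exact norm_Gamma_le_mul_exp_abs hc hθ t
    _ = C * (Real.exp (arg y * t) * Real.exp (-(θ * |t|))) := by ring
    _ ≤ C * Real.exp (-((θ - |arg y|) * |t|)) := by gcongr

lemma mellin_cexp_neg_mul {y : ℂ} (hy : 0 < y.re) {s : ℂ} (hs : 0 < s.re) :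
    mellin (fun t : ℝ => cexp (-(y * t))) s = y ^ (-s) * Gamma s := by
  simp only [mellin, smul_eq_mul]
  exact integral_cpow_mul_cexp_neg_mul_Ioi hs hy

/-- Cahen–Mellin integral: Mellin inversion at `1` for `t ↦ exp (-y t)`. -/
lemma integral_cpow_neg_mul_Gamma {y : ℂ} (hy : 0 < y.re) {c : ℝ} (hc : 0 < c) :
    1 / (2 * (Real.pi : ℂ)) * ∫ t : ℝ, y ^ (-(c + I * t)) * Gamma (c + I * t) = cexp (-y) := by
  have hmellin (t : ℝ) : mellin (fun t : ℝ => cexp (-(y * t))) (c + I * t) =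
      y ^ (-(c + I * t)) * Gamma (c + I * t) := mellin_cexp_neg_mul hy (by simpa using hc)
  have hconv : MellinConvergent (fun t : ℝ => cexp (-(y * t))) c := by
    simpa [MellinConvergent] using integrableOn_cpow_mul_cexp_neg_mul_Ioi (s := c) (by simpa) hy
  have hvert : VerticalIntegrable (mellin fun t : ℝ => cexp (-(y * t))) c := by
    simp only [VerticalIntegrable, mul_comm _ I, hmellin]
    exact integrable_cpow_neg_mul_Gamma hy hc
  have := mellinInv_mellin_eq c _ one_pos hconv hvert (by fun_prop)
  simp only [mellinInv, ofReal_one, one_cpow, one_smul, mul_comm _ I, hmellin, mul_one] at this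
  rw [← this, real_smul]
  push_cast
  rfl

lemma ofReal_cpow_neg_mul_cexp {r φ : ℝ} (hr : 0 < r) (hφ : |φ| < Real.pi) (s : ℂ) :
    (r : ℂ) ^ (-s) * cexp (I * s * φ) = (r * cexp (-φ * I)) ^ (-s) := by
  have hlog : log (cexp (-φ * I)) = -φ * I :=
    log_exp (by simp; linarith [abs_lt.mp hφ]) (by simp; linarith [abs_lt.mp hφ])
  rw [cpow_def_of_ne_zero (mul_ne_zero (ofReal_ne_zero.mpr hr.ne') (exp_ne_zero _)),
    log_ofReal_mul hr (exp_ne_zero _), hlog, cpow_def_of_ne_zero (ofReal_ne_zero.mpr hr.ne'),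
    ofReal_log hr.le, ← Complex.exp_add]
  ring_nf

lemma integral_ofReal_cpow_neg_mul_cexp_mul_Gamma {r c φ : ℝ} (hr : 0 < r) (hc : 0 < c)
    (hφ : |φ| < Real.pi / 2) :
    Integrable (fun t : ℝ => (r : ℂ) ^ (-(c + I * t)) * cexp (I * (c + I * t) * φ) *
      Gamma (c + I * t)) ∧
    1 / (2 * (Real.pi : ℂ)) * ∫ t : ℝ, (r : ℂ) ^ (-(c + I * t)) * cexp (I * (c + I * t) * φ) *
      Gamma (c + I * t) = cexp (-(r * cexp (-φ * I))) := by
  have hy : 0 < ((r : ℂ) * cexp (-φ * I)).re := by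
    rw [← ofReal_neg, re_ofReal_mul, exp_ofReal_mul_I_re, Real.cos_neg]
    exact mul_pos hr (Real.cos_pos_of_mem_Ioo (abs_lt.mp hφ))
  simp only [ofReal_cpow_neg_mul_cexp hr (hφ.trans (by linarith [Real.pi_pos]))]
  exact ⟨integrable_cpow_neg_mul_Gamma hy hc, integral_cpow_neg_mul_Gamma hy hc⟩

/-- The inverse Mellin transform of the Gamma function with the rotated phase:
for each `0 < θ < π/2` the integral `I(θ)` converges absolutely, and
`I(θ) → e(x) = exp(2πix)` as `θ → (π/2)⁻`. -/
theorem stmt_6 (x : ℝ) (hx : x ≠ 0) (c : ℝ) (hc : 0 < c) :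
    (∀ θ : ℝ, 0 < θ → θ < Real.pi / 2 →
      Integrable (fun t : ℝ =>
        ((2 * Real.pi * |x| : ℝ) : ℂ) ^ (-((c : ℂ) + Complex.I * (t : ℂ))) *
          Complex.exp (Complex.I * ((c : ℂ) + Complex.I * (t : ℂ)) * (θ : ℂ) *
            ((Real.sign x : ℝ) : ℂ)) *
          Complex.Gamma ((c : ℂ) + Complex.I * (t : ℂ)))) ∧
    Tendsto (fun θ : ℝ =>
        (1 / (2 * (Real.pi : ℂ))) * ∫ t : ℝ,
          ((2 * Real.pi * |x| : ℝ) : ℂ) ^ (-((c : ℂ) + Complex.I * (t : ℂ))) *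
            Complex.exp (Complex.I * ((c : ℂ) + Complex.I * (t : ℂ)) * (θ : ℂ) *
              ((Real.sign x : ℝ) : ℂ)) *
            Complex.Gamma ((c : ℂ) + Complex.I * (t : ℂ)))
      (nhdsWithin (Real.pi / 2) (Set.Iio (Real.pi / 2)))
      (nhds (Complex.exp (2 * (Real.pi : ℂ) * Complex.I * (x : ℂ)))) := by
  have hr : 0 < 2 * Real.pi * |x| := by positivity
  have hsign : |Real.sign x| = 1 := by
    rcases Real.sign_apply_eq_of_ne_zero x hx with h | h <;> simp [h]
  have hφ {θ : ℝ} (h₀ : 0 < θ) (h₁ : θ < Real.pi / 2) : |θ * Real.sign x| < Real.pi / 2 := by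
    rwa [abs_mul, hsign, mul_one, abs_of_pos h₀]
  have hmul (θ : ℝ) (s : ℂ) : I * s * θ * (Real.sign x : ℂ) = I * s * ↑(θ * Real.sign x) := by
    push_cast; ring
  simp only [hmul]
  refine ⟨fun θ h₀ h₁ => (integral_ofReal_cpow_neg_mul_cexp_mul_Gamma hr hc (hφ h₀ h₁)).1, ?_⟩
  have hlimit : cexp (-((2 * Real.pi * |x| : ℝ) * cexp (-↑(Real.pi / 2 * Real.sign x) * I))) =
      cexp (2 * Real.pi * I * x) := by
    rcases hx.lt_or_gt with h | h
    · rw [Real.sign_of_neg h, abs_of_neg h,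
        show -↑(Real.pi / 2 * -1) * I = Real.pi / 2 * I by push_cast; ring, exp_pi_div_two_mul_I]
      push_cast; ring_nf
    · rw [Real.sign_of_pos h, abs_of_pos h,
        show -↑(Real.pi / 2 * 1) * I = -Real.pi / 2 * I by push_cast; ring,
        exp_neg_pi_div_two_mul_I]
      push_cast; ring_nf
  rw [← hlimit]
  refine Tendsto.congr' ?_ ((Continuous.tendsto (by fun_prop : Continuous fun θ : ℝ =>
    cexp (-((2 * Real.pi * |x| : ℝ) * cexp (-↑(θ * Real.sign x) * I)))) _).mono_left
    nhdsWithin_le_nhds)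
  filter_upwards [Ioo_mem_nhdsLT (by linarith [Real.pi_pos] : 0 < Real.pi / 2)] with θ hθ
  exact (integral_ofReal_cpow_neg_mul_cexp_mul_Gamma hr hc (hφ hθ.1 hθ.2)).2.symm
end

section
/- Let A be the real 3×3 matrix with rows (g,h,j), (d,e,f), (a,b,c), and suppose det(A) > 0 and a² + b² ≠ 0. Set ξ₁ = (a,b,c), ξ₂ = (bd−ae, cd−af, ce−bf), ξ₃ = (bg−ah, cg−aj, ch−bj), and define r = ‖ξ₁‖, y₁ = ‖ξ₂‖/‖ξ₁‖², y₂ = det(A)·‖ξ₁‖/‖ξ₂‖², x₁ = (ad+be+cf)/‖ξ₁‖², x₂ = (ξ₂·ξ₃)/‖ξ₂‖², x₃ = (ag+bh+cj)/‖ξ₁‖². Let k be the 3×3 matrix with rows ( (ce−bf)/‖ξ₂‖, (af−cd)/‖ξ₂‖, (bd−ae)/‖ξ₂‖ ), ( (b(bd−ae)+c(cd−af))/(‖ξ₁‖‖ξ₂‖), (a(ae−bd)+c(ce−bf))/(‖ξ₁‖‖ξ₂‖), (a(af−cd)+b(bf−ce))/(‖ξ₁‖‖ξ₂‖) ), ( a/‖ξ₁‖,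 b/‖ξ₁‖, c/‖ξ₁‖ ). Then y₁ > 0, y₂ > 0, k is orthogonal with det(k) = 1, and A = r · n(x) · diag(y₁y₂, y₁, 1) · k, where n(x) is the upper unitriangular matrix with rows (1, x₂, x₃), (0, 1, x₁), (0, 0, 1). -/
/-!
Write `p, u, v` for the rows of `A` and `w = u × v`. Then `w, v × w, v` is an orthogonal frame with
`|v × w| = |v| |w|` and determinant `|v|² |w|² > 0`, so normalising its rows gives `k ∈ SO(3)`.
Expanding `p` and `u` in this frame gives the unitriangular factor: the coefficient of `w` in `p`
is `p · w / |w|² = det A / |w|²` and the coefficient of `v × w` in `u` is `1 / |v|²`. The vectors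
`ξ₂, ξ₃` of the statement are `u × v` and `p × v` up to the same signed permutation of coordinates,
so `ξ₂ · ξ₃ = p · (v × w)`. Finally `det A = p · w > 0` forces `v ≠ 0` and `w ≠ 0`.
-/

open Matrix

namespace Matrix

lemma dotProduct_self_nonneg {n R : Type*} [Fintype n] [CommRing R] [LinearOrder R]
    [IsStrictOrderedRing R] (v : n → R) : 0 ≤ v ⬝ᵥ v :=
  Finset.sum_nonneg fun i _ ↦ mul_self_nonneg (v i)

section CommRing

variable {R : Type*} [CommRing R]

def crossFrame (u v : Fin 3 → R) : Matrix (Fin 3) (Fin 3) R :=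
  ![u ⨯₃ v, v ⨯₃ (u ⨯₃ v), v]

lemma crossFrame_mul_transpose (u v : Fin 3 → R) :
    crossFrame u v * (crossFrame u v)ᵀ =
      diagonal ![u ⨯₃ v ⬝ᵥ u ⨯₃ v, v ⬝ᵥ v * (u ⨯₃ v ⬝ᵥ u ⨯₃ v), v ⬝ᵥ v] := by
  ext i j
  change crossFrame u v i ⬝ᵥ crossFrame u v j = _
  rw [crossFrame]
  have hvw : v ⬝ᵥ u ⨯₃ v = 0 := dot_cross_self u v
  generalize u ⨯₃ v = w at hvw ⊢
  fin_cases i <;> fin_cases j <;>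
    simp [cross_dot_cross, dot_self_cross, dot_cross_self, dotProduct_comm _ v,
      dotProduct_comm (v ⨯₃ w), hvw]

lemma det_crossFrame (u v : Fin 3 → R) :
    (crossFrame u v).det = v ⬝ᵥ v * (u ⨯₃ v ⬝ᵥ u ⨯₃ v) := by
  rw [crossFrame]
  have hvw : v ⬝ᵥ u ⨯₃ v = 0 := dot_cross_self u v
  generalize u ⨯₃ v = w at hvw ⊢
  rw [← triple_product_eq_det, ← cross_anticomm v (v ⨯₃ w), cross_cross_eq_smul_sub_smul']
  simp [hvw]

-- The expansion of `p` in the orthogonal frame `w, v × w, v`, with denominators cleared.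
lemma smul_eq_sum_smul_crossFrame_rows (p u v : Fin 3 → R) :
    (v ⬝ᵥ v * (u ⨯₃ v ⬝ᵥ u ⨯₃ v)) • p =
      (v ⬝ᵥ v * det ![p, u, v]) • u ⨯₃ v + (p ⬝ᵥ v ⨯₃ (u ⨯₃ v)) • v ⨯₃ (u ⨯₃ v) +
        (u ⨯₃ v ⬝ᵥ u ⨯₃ v * (v ⬝ᵥ p)) • v := by
  rw [← triple_product_eq_det]
  ext i
  fin_cases i <;> simp [cross_apply, vec3_dotProduct, vecHead, vecTail] <;> ring

end CommRing

section LinearOrder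

variable {R : Type*} [CommRing R] [LinearOrder R] [IsStrictOrderedRing R] {p u v : Fin 3 → R}

lemma dotProduct_self_pos_of_det_ne_zero (h : det ![p, u, v] ≠ 0) : 0 < v ⬝ᵥ v := by
  refine (dotProduct_self_nonneg v).lt_of_ne' fun hv ↦ h ?_
  rw [dotProduct_self_eq_zero] at hv
  rw [← triple_product_eq_det, hv, map_zero, dotProduct_zero]

lemma cross_dotProduct_self_pos_of_det_ne_zero (h : det ![p, u, v] ≠ 0) :
    0 < u ⨯₃ v ⬝ᵥ u ⨯₃ v := by
  refine (dotProduct_self_nonneg _).lt_of_ne' fun hw ↦ h ?_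
  rw [dotProduct_self_eq_zero] at hw
  rw [← triple_product_eq_det, hw, dotProduct_zero]

end LinearOrder

section Field

variable {K : Type*} [Field K]

lemma eq_unitriangular_mul_diagonal_mul_crossFrame (p u v : Fin 3 → K) (hv : v ⬝ᵥ v ≠ 0)
    (hw : u ⨯₃ v ⬝ᵥ u ⨯₃ v ≠ 0) :
    (![p, u, v] : Matrix (Fin 3) (Fin 3) K) =
      !![1, p ⬝ᵥ v ⨯₃ (u ⨯₃ v) / (u ⨯₃ v ⬝ᵥ u ⨯₃ v), v ⬝ᵥ p / (v ⬝ᵥ v);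
         0, 1, v ⬝ᵥ u / (v ⬝ᵥ v);
         0, 0, 1] *
      diagonal ![det ![p, u, v] / (u ⨯₃ v ⬝ᵥ u ⨯₃ v), (v ⬝ᵥ v)⁻¹, 1] * crossFrame u v := by
  ext i j
  have hp := congrFun (smul_eq_sum_smul_crossFrame_rows p u v) j
  have hu := congrFun (cross_cross_eq_smul_sub_smul' v u v) j
  simp only [Pi.add_apply, Pi.sub_apply, Pi.smul_apply, smul_eq_mul] at hp hu
  rw [mul_apply, Fin.sum_univ_three]
  simp only [mul_diagonal]
  fin_cases i <;> simp [crossFrame]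
  · field_simp
    linear_combination hp
  · rw [hu, dotProduct_comm u v]
    field_simp
    ring

variable {u v : Fin 3 → K} {n₁ n₂ : K}

lemma diagonal_mul_crossFrame_transpose_mul_self (hn₁ : n₁ ^ 2 = v ⬝ᵥ v)
    (hn₂ : n₂ ^ 2 = u ⨯₃ v ⬝ᵥ u ⨯₃ v) (h₁ : n₁ ≠ 0) (h₂ : n₂ ≠ 0) :
    (diagonal ![n₂⁻¹, (n₁ * n₂)⁻¹, n₁⁻¹] * crossFrame u v)ᵀ *
      (diagonal ![n₂⁻¹, (n₁ * n₂)⁻¹, n₁⁻¹] * crossFrame u v) = 1 := by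
  rw [mul_eq_one_comm, transpose_mul, diagonal_transpose, Matrix.mul_assoc,
    ← Matrix.mul_assoc (crossFrame u v), crossFrame_mul_transpose, diagonal_mul_diagonal,
    diagonal_mul_diagonal, ← hn₁, ← hn₂, ← diagonal_one]
  congr 1
  ext i
  fin_cases i <;> simp <;> field_simp

lemma det_diagonal_mul_crossFrame (hn₁ : n₁ ^ 2 = v ⬝ᵥ v)
    (hn₂ : n₂ ^ 2 = u ⨯₃ v ⬝ᵥ u ⨯₃ v) (h₁ : n₁ ≠ 0) (h₂ : n₂ ≠ 0) :
    (diagonal ![n₂⁻¹, (n₁ * n₂)⁻¹, n₁⁻¹] * crossFrame u v).det = 1 := by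
  rw [det_mul, det_crossFrame, det_diagonal, Fin.prod_univ_three, ← hn₁, ← hn₂]
  simp
  field_simp

lemma eq_smul_unitriangular_mul_diagonal_mul_crossFrame (p : Fin 3 → K)
    (hn₁ : n₁ ^ 2 = v ⬝ᵥ v) (hn₂ : n₂ ^ 2 = u ⨯₃ v ⬝ᵥ u ⨯₃ v) (h₁ : n₁ ≠ 0) (h₂ : n₂ ≠ 0) :
    (![p, u, v] : Matrix (Fin 3) (Fin 3) K) =
      n₁ • (!![1, p ⬝ᵥ v ⨯₃ (u ⨯₃ v) / n₂ ^ 2, v ⬝ᵥ p / n₁ ^ 2;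
               0, 1, v ⬝ᵥ u / n₁ ^ 2;
               0, 0, 1] *
        diagonal ![n₂ / n₁ ^ 2 * (det ![p, u, v] * n₁ / n₂ ^ 2), n₂ / n₁ ^ 2, 1] *
        (diagonal ![n₂⁻¹, (n₁ * n₂)⁻¹, n₁⁻¹] * crossFrame u v)) := by
  conv_lhs => rw [eq_unitriangular_mul_diagonal_mul_crossFrame p u v (hn₁ ▸ pow_ne_zero 2 h₁)
    (hn₂ ▸ pow_ne_zero 2 h₂), ← hn₁, ← hn₂]
  simp only [Matrix.mul_assoc]
  rw [← Matrix.mul_assoc (diagonal _), diagonal_mul_diagonal, ← Matrix.mul_smul,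
    ← Matrix.smul_mul, ← diagonal_smul]
  congr 3
  ext i
  fin_cases i <;> simp <;> field_simp

end Field

end Matrix

theorem stmt_8_general (g h j d e f a b c : ℝ)
    (hdet : 0 < (!![g, h, j; d, e, f; a, b, c] : Matrix (Fin 3) (Fin 3) ℝ).det) :
    let A : Matrix (Fin 3) (Fin 3) ℝ := !![g, h, j; d, e, f; a, b, c]
    let n₁ : ℝ := Real.sqrt (a ^ 2 + b ^ 2 + c ^ 2)
    let n₂ : ℝ := Real.sqrt ((b * d - a * e) ^ 2 + (c * d - a * f) ^ 2 + (c * e - b * f) ^ 2)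
    let r : ℝ := n₁
    let y₁ : ℝ := n₂ / n₁ ^ 2
    let y₂ : ℝ := A.det * n₁ / n₂ ^ 2
    let x₁ : ℝ := (a * d + b * e + c * f) / n₁ ^ 2
    let x₂ : ℝ := ((b * d - a * e) * (b * g - a * h) + (c * d - a * f) * (c * g - a * j) +
      (c * e - b * f) * (c * h - b * j)) / n₂ ^ 2
    let x₃ : ℝ := (a * g + b * h + c * j) / n₁ ^ 2
    let k : Matrix (Fin 3) (Fin 3) ℝ :=
      !![(c * e - b * f) / n₂, (a * f - c * d) / n₂, (b * d - a * e) / n₂;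
         (b * (b * d - a * e) + c * (c * d - a * f)) / (n₁ * n₂),
           (a * (a * e - b * d) + c * (c * e - b * f)) / (n₁ * n₂),
           (a * (a * f - c * d) + b * (b * f - c * e)) / (n₁ * n₂);
         a / n₁, b / n₁, c / n₁]
    0 < y₁ ∧ 0 < y₂ ∧ k.transpose * k = 1 ∧ k.det = 1 ∧
      A = r • (!![1, x₂, x₃; 0, 1, x₁; 0, 0, 1] *
        Matrix.diagonal ![y₁ * y₂, y₁, 1] * k) := by
  intro A n₁ n₂ r y₁ y₂ x₁ x₂ x₃ k
  let p : Fin 3 → ℝ := ![g, h, j]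
  let u : Fin 3 → ℝ := ![d, e, f]
  let v : Fin 3 → ℝ := ![a, b, c]
  have hvv : v ⬝ᵥ v = a ^ 2 + b ^ 2 + c ^ 2 := by simp [v]; ring
  have hww : u ⨯₃ v ⬝ᵥ u ⨯₃ v =
      (b * d - a * e) ^ 2 + (c * d - a * f) ^ 2 + (c * e - b * f) ^ 2 := by
    simp [u, v, cross_apply]; ring
  have hv : 0 < v ⬝ᵥ v := dotProduct_self_pos_of_det_ne_zero hdet.ne'
  have hw : 0 < u ⨯₃ v ⬝ᵥ u ⨯₃ v := cross_dotProduct_self_pos_of_det_ne_zero hdet.ne'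
  have hn₁ : n₁ ^ 2 = v ⬝ᵥ v := by rw [hvv]; exact Real.sq_sqrt (by positivity)
  have hn₂ : n₂ ^ 2 = u ⨯₃ v ⬝ᵥ u ⨯₃ v := by rw [hww]; exact Real.sq_sqrt (by positivity)
  have hn₁pos : 0 < n₁ := Real.sqrt_pos.mpr (hvv ▸ hv)
  have hn₂pos : 0 < n₂ := Real.sqrt_pos.mpr (hww ▸ hw)
  have hk : k = diagonal ![n₂⁻¹, (n₁ * n₂)⁻¹, n₁⁻¹] * crossFrame u v := by
    ext i l
    rw [diagonal_mul]
    fin_cases i <;> fin_cases l <;> simp [k, u, v, crossFrame, cross_apply] <;> ring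
  have hN : !![1, x₂, x₃; 0, 1, x₁; 0, 0, 1] =
      !![1, p ⬝ᵥ v ⨯₃ (u ⨯₃ v) / n₂ ^ 2, v ⬝ᵥ p / n₁ ^ 2; 0, 1, v ⬝ᵥ u / n₁ ^ 2; 0, 0, 1] := by
    ext i l
    fin_cases i <;> fin_cases l <;> simp [x₁, x₂, x₃, p, u, v, cross_apply] <;> ring
  refine ⟨by positivity, by positivity, ?_, ?_, ?_⟩
  · rw [hk]; exact diagonal_mul_crossFrame_transpose_mul_self hn₁ hn₂ hn₁pos.ne' hn₂pos.ne'
  · rw [hk]; exact det_diagonal_mul_crossFrame hn₁ hn₂ hn₁pos.ne' hn₂pos.ne'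
  · rw [hk, hN]
    exact eq_smul_unitriangular_mul_diagonal_mul_crossFrame p hn₁ hn₂ hn₁pos.ne' hn₂pos.ne'

/-- The explicit Iwasawa decomposition `A = r · n(x) · diag(y₁y₂, y₁, 1) · k` of a real
3×3 matrix `A` with positive determinant and `a² + b² ≠ 0`, with all components given
by explicit formulas in the entries of `A`. -/
theorem stmt_8 (g h j d e f a b c : ℝ)
    (hdet : 0 < (!![g, h, j; d, e, f; a, b, c] : Matrix (Fin 3) (Fin 3) ℝ).det)
    (hab : a ^ 2 + b ^ 2 ≠ 0) :
    let A : Matrix (Fin 3) (Fin 3) ℝ := !![g, h, j; d, e, f; a, b, c]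
    let n₁ : ℝ := Real.sqrt (a ^ 2 + b ^ 2 + c ^ 2)
    let n₂ : ℝ := Real.sqrt ((b * d - a * e) ^ 2 + (c * d - a * f) ^ 2 + (c * e - b * f) ^ 2)
    let r : ℝ := n₁
    let y₁ : ℝ := n₂ / n₁ ^ 2
    let y₂ : ℝ := A.det * n₁ / n₂ ^ 2
    let x₁ : ℝ := (a * d + b * e + c * f) / n₁ ^ 2
    let x₂ : ℝ := ((b * d - a * e) * (b * g - a * h) + (c * d - a * f) * (c * g - a * j) +
      (c * e - b * f) * (c * h - b * j)) / n₂ ^ 2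
    let x₃ : ℝ := (a * g + b * h + c * j) / n₁ ^ 2
    let k : Matrix (Fin 3) (Fin 3) ℝ :=
      !![(c * e - b * f) / n₂, (a * f - c * d) / n₂, (b * d - a * e) / n₂;
         (b * (b * d - a * e) + c * (c * d - a * f)) / (n₁ * n₂),
           (a * (a * e - b * d) + c * (c * e - b * f)) / (n₁ * n₂),
           (a * (a * f - c * d) + b * (b * f - c * e)) / (n₁ * n₂);
         a / n₁, b / n₁, c / n₁]
    0 < y₁ ∧ 0 < y₂ ∧ k.transpose * k = 1 ∧ k.det = 1 ∧
      A = r • (!![1, x₂, x₃; 0, 1, x₁; 0, 0, 1] *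
        Matrix.diagonal ![y₁ * y₂, y₁, 1] * k) :=
  stmt_8_general g h j d e f a b c hdet
end

section
/- Let γ = [[α,β],[a,b]] be a real 2×2 matrix with αb − βa = 1, embedded in SL(3,ℝ) as g = [[α,β,0],[a,b,0],[0,0,1]]. Let x₁, x₂, x₃ be real, y₁ > 0, y₂ > 0, let n(x) be the upper unitriangular matrix with rows (1,x₂,x₃), (0,1,x₁), (0,0,1), and let t(y₁,y₂) = diag(y₁y₂, y₁, 1). Then there exist x* ∈ ℝ³ and an orthogonal 3×3 matrix k of determinant 1 such that g · n(x) · t(y₁,y₂) = n(x*) · t(y₁*, y₂*) · k, where y₁* = y₁·√( y₂²a² + (a x₂ + b)² ) and y₂* = y₂ / ( y₂²a² + (a x₂ + b)² ). -/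
/-!
Only the upper-left `2 × 2` block of `g · n(x) · t(y)` is affected by `g`. Its bottom row is
`y₁ · (a y₂, a x₂ + b)`, so the rotation `k` in the first two coordinates that turns this row into
`(0, y₁ r)`, with `r² = y₂²a² + (a x₂ + b)²`, brings the block to upper triangular form; reading
off the diagonal gives `y₁* = y₁ r` and `y₁* y₂* = y₁ y₂ / r` (since `det γ = 1`).
-/

open Matrix

section Rotation

variable {R : Type*} [CommRing R]

def rotationXY (c s : R) : Matrix (Fin 3) (Fin 3) R :=
  !![c, -s, 0; s, c, 0; 0, 0, 1]

theorem rotationXY_transpose_mul_self {c s : R} (h : c ^ 2 + s ^ 2 = 1) :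
    (rotationXY c s)ᵀ * rotationXY c s = 1 := by
  ext i j
  fin_cases i <;> fin_cases j <;>
    simp [rotationXY, mul_apply, Fin.sum_univ_three, ← sq, h, add_comm (s ^ 2), mul_comm]

theorem det_rotationXY (c s : R) : (rotationXY c s).det = c ^ 2 + s ^ 2 := by
  simp [rotationXY, det_fin_three]
  ring

end Rotation

theorem sq_mul_sq_add_sq_pos {y a b x : ℝ} (hy : y ≠ 0) (hab : a ≠ 0 ∨ b ≠ 0) :
    0 < y ^ 2 * a ^ 2 + (a * x + b) ^ 2 := by
  rcases eq_or_ne a 0 with rfl | ha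
  · simpa [sq_pos_iff] using hab
  · positivity

theorem sl2_mul_unipotent_mul_diagonal_eq {K : Type*} [Field K] {α β a b : K}
    (h : α * b - β * a = 1) (x₁ x₂ x₃ y₁ y₂ : K) {r : K}
    (hr : r ^ 2 = y₂ ^ 2 * a ^ 2 + (a * x₂ + b) ^ 2) (hr0 : r ≠ 0) :
    !![α, β, 0; a, b, 0; 0, 0, 1] * !![1, x₂, x₃; 0, 1, x₁; 0, 0, 1] *
        diagonal ![y₁ * y₂, y₁, 1]
      = !![1, (α * a * y₂ ^ 2 + (a * x₂ + b) * (α * x₂ + β)) / r ^ 2, α * x₃ + β * x₁;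
            0, 1, a * x₃ + b * x₁; 0, 0, 1] *
          diagonal ![y₁ * r * (y₂ / (y₂ ^ 2 * a ^ 2 + (a * x₂ + b) ^ 2)), y₁ * r, 1] *
          rotationXY ((a * x₂ + b) / r) (a * y₂ / r) := by
  rw [← hr]
  simp only [rotationXY, diagonal_vec3, mul_fin_three]
  ext i j
  fin_cases i <;> fin_cases j <;>
    simp only [Fin.zero_eta, Fin.mk_one, Fin.reduceFinMk, of_apply, cons_val', cons_val,
      cons_val_fin_one, mul_zero, mul_one, zero_mul, one_mul, add_zero, zero_add, mul_neg,
      neg_zero] <;>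
    field_simp
  · linear_combination α * y₁ * y₂ * hr + y₁ * y₂ * (a * x₂ + b) * h
  · linear_combination (α * x₂ + β) * y₁ * hr - y₁ * y₂ ^ 2 * a * h

theorem stmt_9_general (α β a b : ℝ) (h : α * b - β * a = 1)
    (x₁ x₂ x₃ : ℝ) (y₁ y₂ : ℝ) (hy₂ : 0 < y₂) :
    ∃ (x₁' x₂' x₃' : ℝ) (k : Matrix (Fin 3) (Fin 3) ℝ),
      k.transpose * k = 1 ∧ k.det = 1 ∧
      (!![α, β, 0; a, b, 0; 0, 0, 1] : Matrix (Fin 3) (Fin 3) ℝ) *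
          !![1, x₂, x₃; 0, 1, x₁; 0, 0, 1] *
          Matrix.diagonal ![y₁ * y₂, y₁, 1]
        = !![1, x₂', x₃'; 0, 1, x₁'; 0, 0, 1] *
            Matrix.diagonal
              ![(y₁ * Real.sqrt (y₂ ^ 2 * a ^ 2 + (a * x₂ + b) ^ 2)) *
                  (y₂ / (y₂ ^ 2 * a ^ 2 + (a * x₂ + b) ^ 2)),
                y₁ * Real.sqrt (y₂ ^ 2 * a ^ 2 + (a * x₂ + b) ^ 2), 1] * k := by
  have hab : a ≠ 0 ∨ b ≠ 0 := by
    by_contra! hab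
    simp [hab.1, hab.2] at h
  have hD := sq_mul_sq_add_sq_pos (x := x₂) hy₂.ne' hab
  set r := Real.sqrt (y₂ ^ 2 * a ^ 2 + (a * x₂ + b) ^ 2)
  have hr : r ^ 2 = y₂ ^ 2 * a ^ 2 + (a * x₂ + b) ^ 2 := Real.sq_sqrt hD.le
  have hr0 : r ≠ 0 := (Real.sqrt_pos.2 hD).ne'
  have hcs : ((a * x₂ + b) / r) ^ 2 + (a * y₂ / r) ^ 2 = 1 := by
    field_simp
    linear_combination -hr
  exact ⟨_, _, _, _, rotationXY_transpose_mul_self hcs, (det_rotationXY _ _).trans hcs,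
    sl2_mul_unipotent_mul_diagonal_eq h x₁ x₂ x₃ y₁ y₂ hr hr0⟩

/-- Left translation by an embedded SL(2,ℝ) element: the Iwasawa `y`-coordinates of
`g·n(x)·t(y₁,y₂)` are `y₁* = y₁√(y₂²a² + (ax₂+b)²)` and `y₂* = y₂/(y₂²a² + (ax₂+b)²)`. -/
theorem stmt_9 (α β a b : ℝ) (h : α * b - β * a = 1)
    (x₁ x₂ x₃ : ℝ) (y₁ y₂ : ℝ) (hy₁ : 0 < y₁) (hy₂ : 0 < y₂) :
    ∃ (x₁' x₂' x₃' : ℝ) (k : Matrix (Fin 3) (Fin 3) ℝ),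
      k.transpose * k = 1 ∧ k.det = 1 ∧
      (!![α, β, 0; a, b, 0; 0, 0, 1] : Matrix (Fin 3) (Fin 3) ℝ) *
          !![1, x₂, x₃; 0, 1, x₁; 0, 0, 1] *
          Matrix.diagonal ![y₁ * y₂, y₁, 1]
        = !![1, x₂', x₃'; 0, 1, x₁'; 0, 0, 1] *
            Matrix.diagonal
              ![(y₁ * Real.sqrt (y₂ ^ 2 * a ^ 2 + (a * x₂ + b) ^ 2)) *
                  (y₂ / (y₂ ^ 2 * a ^ 2 + (a * x₂ + b) ^ 2)),
                y₁ * Real.sqrt (y₂ ^ 2 * a ^ 2 + (a * x₂ + b) ^ 2), 1] * k :=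
  stmt_9_general α β a b h x₁ x₂ x₃ y₁ y₂ hy₂
end

section
/- Let γ ∈ SL(3,ℤ) have second row (d,e,f) and third row (A₁,B₁,C₁), and define A₂ = B₁d − A₁e, B₂ = A₁f − C₁d, C₂ = C₁e − B₁f. Then A₁C₂ + B₁B₂ + C₁A₂ = 0, gcd(A₁,B₁,C₁) = 1, and gcd(A₂,B₂,C₂) = 1. -/
/-!
Expanding `det γ = 1` along the third row writes `1` as an integral combination of
`A₁, B₁, C₁`; expanding it along the first row writes `1` as an integral combination of the
`2 × 2` minors `C₂, B₂, A₂` of the bottom two rows. Either relation forces the corresponding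
gcd to be `1`. The quadric relation is the vanishing of the determinant with a repeated row.
-/

theorem Int.gcd_gcd_eq_one_of_linear_combination_eq_one {a b c x y z : ℤ}
    (h : a * x + b * y + c * z = 1) : Int.gcd (Int.gcd a b) c = 1 := by
  obtain ⟨k, hk⟩ : (Int.gcd a b : ℤ) ∣ a * x + b * y :=
    dvd_add ((Int.gcd_dvd_left a b).mul_right x) ((Int.gcd_dvd_right a b).mul_right y)
  exact Int.isCoprime_iff_gcd_eq_one.mp ⟨k, z, by linear_combination h - hk⟩

/-- Plücker coordinates of `γ ∈ SL(3,ℤ)`: with `(d,e,f)` the second row,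
`(A₁,B₁,C₁)` the third row, and `A₂ = B₁d − A₁e`, `B₂ = A₁f − C₁d`, `C₂ = C₁e − B₁f`,
one has `A₁C₂ + B₁B₂ + C₁A₂ = 0`, `gcd(A₁,B₁,C₁) = 1`, and `gcd(A₂,B₂,C₂) = 1`. -/
theorem stmt_10 (γ : Matrix (Fin 3) (Fin 3) ℤ) (hγ : γ.det = 1) :
    γ 2 0 * (γ 2 2 * γ 1 1 - γ 2 1 * γ 1 2) +
        γ 2 1 * (γ 2 0 * γ 1 2 - γ 2 2 * γ 1 0) +
        γ 2 2 * (γ 2 1 * γ 1 0 - γ 2 0 * γ 1 1) = 0 ∧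
    Int.gcd (Int.gcd (γ 2 0) (γ 2 1)) (γ 2 2) = 1 ∧
    Int.gcd (Int.gcd (γ 2 1 * γ 1 0 - γ 2 0 * γ 1 1) (γ 2 0 * γ 1 2 - γ 2 2 * γ 1 0))
      (γ 2 2 * γ 1 1 - γ 2 1 * γ 1 2) = 1 := by
  have expand_row_two : γ 2 0 * (γ 0 1 * γ 1 2 - γ 0 2 * γ 1 1) +
      γ 2 1 * (γ 0 2 * γ 1 0 - γ 0 0 * γ 1 2) + γ 2 2 * (γ 0 0 * γ 1 1 - γ 0 1 * γ 1 0) = 1 := by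
    rw [← hγ, Matrix.det_fin_three]; ring
  have expand_row_zero : (γ 2 1 * γ 1 0 - γ 2 0 * γ 1 1) * γ 0 2 +
      (γ 2 0 * γ 1 2 - γ 2 2 * γ 1 0) * γ 0 1 + (γ 2 2 * γ 1 1 - γ 2 1 * γ 1 2) * γ 0 0 = 1 := by
    rw [← hγ, Matrix.det_fin_three]; ring
  exact ⟨by ring, Int.gcd_gcd_eq_one_of_linear_combination_eq_one expand_row_two,
    Int.gcd_gcd_eq_one_of_linear_combination_eq_one expand_row_zero⟩
end

section
/- Let γ, γ' ∈ SL(3,ℤ), and for each let the Plücker coordinates be defined by: A₁,B₁,C₁ are the entries of the third row, and with (d,e,f) the second row, A₂ = B₁d − A₁e, B₂ = A₁f − C₁d, C₂ = C₁e − B₁f. Then the six Plücker coordinates of γ and γ' coincide if and only if there exists u ∈ U(ℤ) with γ' = u·γ. -/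
/-- The six Plücker coordinates of `γ, γ' ∈ SL(3,ℤ)` coincide if and only if
`γ' = u·γ` for some upper unitriangular integer matrix `u ∈ U(ℤ)`. -/
theorem stmt_11 (γ γ' : Matrix (Fin 3) (Fin 3) ℤ) (hγ : γ.det = 1) (hγ' : γ'.det = 1) :
    (γ 2 0 = γ' 2 0 ∧ γ 2 1 = γ' 2 1 ∧ γ 2 2 = γ' 2 2 ∧
      γ 2 1 * γ 1 0 - γ 2 0 * γ 1 1 = γ' 2 1 * γ' 1 0 - γ' 2 0 * γ' 1 1 ∧
      γ 2 0 * γ 1 2 - γ 2 2 * γ 1 0 = γ' 2 0 * γ' 1 2 - γ' 2 2 * γ' 1 0 ∧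
      γ 2 2 * γ 1 1 - γ 2 1 * γ 1 2 = γ' 2 2 * γ' 1 1 - γ' 2 1 * γ' 1 2)
    ↔ ∃ u : Matrix (Fin 3) (Fin 3) ℤ,
        u 0 0 = 1 ∧ u 1 1 = 1 ∧ u 2 2 = 1 ∧ u 1 0 = 0 ∧ u 2 0 = 0 ∧ u 2 1 = 0 ∧
        γ' = u * γ := by
  constructor
  · rintro ⟨h1, h2, h3, h4, h5, h6⟩
    set u : Matrix (Fin 3) (Fin 3) ℤ := γ' * γ.adjugate with hu
    have hadjmul : γ.adjugate * γ = 1 := by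
      rw [Matrix.adjugate_mul, hγ, one_smul]
    have hmuladj : γ * γ.adjugate = 1 := by
      rw [Matrix.mul_adjugate, hγ, one_smul]
    have hmul : γ' = u * γ := by
      rw [hu, Matrix.mul_assoc, hadjmul, Matrix.mul_one]
    -- row 2 of u
    have hrow : ∀ j, u 2 j = (1 : Matrix (Fin 3) (Fin 3) ℤ) 2 j := by
      intro j
      rw [← hmuladj]
      simp only [hu, Matrix.mul_apply, Fin.sum_univ_three]
      rw [← h1, ← h2, ← h3]
    have hu20 : u 2 0 = 0 := by rw [hrow 0]; simp [Matrix.one_apply]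
    have hu21 : u 2 1 = 0 := by rw [hrow 1]; simp [Matrix.one_apply]
    have hu22 : u 2 2 = 1 := by rw [hrow 2]; simp [Matrix.one_apply]
    -- cross product facts
    have hx1 : γ 2 1 * (γ' 1 0 - γ 1 0) - γ 2 0 * (γ' 1 1 - γ 1 1) = 0 := by
      linear_combination (-1 : ℤ) * h4 + γ' 1 0 * h2 - γ' 1 1 * h1
    have hx2 : γ 2 0 * (γ' 1 2 - γ 1 2) - γ 2 2 * (γ' 1 0 - γ 1 0) = 0 := by
      linear_combination (-1 : ℤ) * h5 + γ' 1 2 * h1 - γ' 1 0 * h3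
    have hx3 : γ 2 2 * (γ' 1 1 - γ 1 1) - γ 2 1 * (γ' 1 2 - γ 1 2) = 0 := by
      linear_combination (-1 : ℤ) * h6 + γ' 1 1 * h3 - γ' 1 2 * h2
    have hd : γ 0 0 * γ 1 1 * γ 2 2 - γ 0 0 * γ 1 2 * γ 2 1 - γ 0 1 * γ 1 0 * γ 2 2
        + γ 0 1 * γ 1 2 * γ 2 0 + γ 0 2 * γ 1 0 * γ 2 1 - γ 0 2 * γ 1 1 * γ 2 0 = 1 := by
      rw [← Matrix.det_fin_three]; exact hγ
    have hu10 : u 1 0 = 0 := by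
      simp [hu, Matrix.mul_apply, Fin.sum_univ_three, Matrix.adjugate_fin_three]
      linear_combination (-(γ 1 2)) * hx1 + (-(γ 1 1)) * hx2 + (-(γ 1 0)) * hx3
    have hu11 : u 1 1 = 1 := by
      simp [hu, Matrix.mul_apply, Fin.sum_univ_three, Matrix.adjugate_fin_three]
      linear_combination γ 0 2 * hx1 + γ 0 1 * hx2 + γ 0 0 * hx3 + hd
    have hdetu : u.det = 1 := by
      rw [hu, Matrix.det_mul, Matrix.det_adjugate, hγ', hγ]
      norm_num
    have hu00 : u 0 0 = 1 := by
      have h := Matrix.det_fin_three u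
      rw [hdetu, hu10, hu20, hu21, hu11, hu22] at h
      linear_combination (-1 : ℤ) * h
    exact ⟨u, hu00, hu11, hu22, hu10, hu20, hu21, hmul⟩
  · rintro ⟨u, h00, h11, h22, h10, h20, h21, rfl⟩
    refine ⟨?_, ?_, ?_, ?_, ?_, ?_⟩ <;>
      simp [Matrix.mul_apply, Fin.sum_univ_three, h00, h11, h22, h10, h20, h21] <;>
      ring
end

section
/- Let γ be a real 3×3 matrix with det(γ) = 1, with rows (a₁,b₁,b₂), (a₂,b₃,b₄), (c,d₁,d₂), and suppose c ≠ 0. Define the 2×2 matrix u = [[c·b₁ − d₁·a₁, c·b₂ − d₂·a₁],[c·b₃ − d₁·a₂, c·b₄ − d₂·a₂]]. Then det(u) = c, and γ = [[1,0,a₁/c],[0,1,a₂/c],[0,0,1]] · [[u₁₁/c, u₁₂/c, 0],[u₂₁/c, u₂₂/c, 0],[0,0,c]] · w₄ · [[1, d₁/c, d₂/c],[0,1,0],[0,0,1]], where w₄ is the permutation matrix [[0,1,0],[0,0,1],[1,0,0]]. -/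
/-- The explicit Bruhat-type decomposition, for the maximal parabolic `P₂₁`, of an
element of SL(3,ℝ) whose `(3,1)` entry `c` is nonzero (the `w₄` Weyl cell). -/
theorem stmt_12 (a₁ b₁ b₂ a₂ b₃ b₄ c d₁ d₂ : ℝ)
    (hdet : (!![a₁, b₁, b₂; a₂, b₃, b₄; c, d₁, d₂] : Matrix (Fin 3) (Fin 3) ℝ).det = 1)
    (hc : c ≠ 0) :
    let u : Matrix (Fin 2) (Fin 2) ℝ :=
      !![c * b₁ - d₁ * a₁, c * b₂ - d₂ * a₁; c * b₃ - d₁ * a₂, c * b₄ - d₂ * a₂]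
    u.det = c ∧
    (!![a₁, b₁, b₂; a₂, b₃, b₄; c, d₁, d₂] : Matrix (Fin 3) (Fin 3) ℝ) =
      !![1, 0, a₁ / c; 0, 1, a₂ / c; 0, 0, 1] *
        !![u 0 0 / c, u 0 1 / c, 0; u 1 0 / c, u 1 1 / c, 0; 0, 0, c] *
        (!![0, 1, 0; 0, 0, 1; 1, 0, 0] : Matrix (Fin 3) (Fin 3) ℝ) *
        !![1, d₁ / c, d₂ / c; 0, 1, 0; 0, 0, 1] := by
  intro u
  simp [Matrix.det_fin_three] at hdet
  have hu : u.det = c := by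
    simp only [u, Matrix.det_fin_two_of]
    linear_combination c * hdet
  refine ⟨hu, ?_⟩
  have h3 : (3:ℕ) = 2 + 1 := rfl
  ext i j
  fin_cases i <;> fin_cases j <;>
    simp [u, Matrix.mul_apply, Fin.sum_univ_succ] <;>
    field_simp <;> ring
end

section
/- Let μ₁, μ₂, μ₃ be complex numbers with Re(μ₁) > Re(μ₂) > Re(μ₃). Then the function from ℝ³ to ℂ given by (u₁,u₂,u₃) ↦ (1 + u₂² + u₃²)^{(-1+μ₃-μ₂)/2} · (1 + u₁² + (u₃ - u₁u₂)²)^{(-1+μ₂-μ₁)/2} is Lebesgue integrable on ℝ³. -/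
/-!
Write `a, b < -1/2` for the real parts of the two exponents, so that the absolute integrand is
`A ^ a * B ^ b` with `A = 1 + y² + z²` and `B = 1 + x² + (z - x y)²`. Since `z` and `z - x y`
cannot both be smaller than `|x y| / 2`, either `A ≥ 1 + (1 + x²/4) y²` or
`B ≥ 1 + (1 + y²/4) x²`, so the integrand is dominated by two majorants. Each is integrated by
iterating the one-variable formula
`∫ (k + m (t - c)²) ^ p dt = k ^ (p + 1/2) m ^ (-1/2) ∫ (1 + t²) ^ p dt`; the factor
`m ^ (-1/2)` coming from the quadratic in `x` (resp. `y`) supplies the decay that makes the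
last integral converge.
-/

open MeasureTheory Real

section Fubini

variable {α β : Type*} [MeasurableSpace α] [MeasurableSpace β]
  {μ : Measure α} {ν : Measure β} {f : α × β → ℝ}

theorem integrable_prod_of_integral_eq [SFinite ν] {g : α → ℝ}
    (hf : AEStronglyMeasurable f (μ.prod ν)) (hf₀ : ∀ p, 0 ≤ f p)
    (hsec : ∀ x, Integrable (fun y => f (x, y)) ν) (hfib : ∀ x, ∫ y, f (x, y) ∂ν = g x)
    (hg : Integrable g μ) : Integrable f (μ.prod ν) := by
  refine (integrable_prod_iff hf).2 ⟨.of_forall hsec, hg.congr (.of_forall fun x => ?_)⟩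
  simp only [norm_of_nonneg (hf₀ _), hfib]

theorem integral_prod_of_integral_eq [SFinite μ] [SFinite ν] {g : α → ℝ}
    (hf : AEStronglyMeasurable f (μ.prod ν))
    (hf₀ : ∀ p, 0 ≤ f p) (hsec : ∀ x, Integrable (fun y => f (x, y)) ν)
    (hfib : ∀ x, ∫ y, f (x, y) ∂ν = g x) (hg : Integrable g μ) :
    ∫ p, f p ∂(μ.prod ν) = ∫ x, g x ∂μ := by
  rw [integral_prod f (integrable_prod_of_integral_eq hf hf₀ hsec hfib hg)]
  simp only [hfib]

theorem integrable_prod_of_integral_eq' [SFinite μ] [SFinite ν] {g : β → ℝ}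
    (hf : AEStronglyMeasurable f (μ.prod ν)) (hf₀ : ∀ p, 0 ≤ f p)
    (hsec : ∀ y, Integrable (fun x => f (x, y)) μ) (hfib : ∀ y, ∫ x, f (x, y) ∂μ = g y)
    (hg : Integrable g ν) : Integrable f (μ.prod ν) := by
  refine (integrable_prod_iff' hf).2 ⟨.of_forall hsec, hg.congr (.of_forall fun y => ?_)⟩
  simp only [norm_of_nonneg (hf₀ _), hfib]

end Fubini

lemma integrable_one_add_sq_rpow {p : ℝ} (hp : p < -(1 / 2)) :
    Integrable fun t : ℝ => (1 + t ^ 2) ^ p := by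
  have := integrable_rpow_neg_one_add_norm_sq (E := ℝ) (μ := volume) (r := -(2 * p))
    (by simp only [Module.finrank_self, Nat.cast_one]; linarith)
  simpa [neg_div, mul_div_assoc] using this

lemma add_mul_sq_rpow_eq {k : ℝ} (hk : 0 < k) {m : ℝ} (hm : 0 ≤ m) (c p t : ℝ) :
    (k + m * (t - c) ^ 2) ^ p = k ^ p * (1 + (√(m / k) * t - √(m / k) * c) ^ 2) ^ p := by
  rw [← mul_sub, mul_pow, sq_sqrt (by positivity), ← mul_rpow hk.le (by positivity)]
  field_simp

lemma integrable_add_mul_sq_rpow {p : ℝ} (hp : p < -(1 / 2)) {k m : ℝ} (hk : 0 < k) (hm : 0 < m)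
    (c : ℝ) : Integrable fun t : ℝ => (k + m * (t - c) ^ 2) ^ p := by
  simp_rw [add_mul_sq_rpow_eq hk hm.le]
  exact (((integrable_one_add_sq_rpow hp).comp_sub_right _).comp_mul_left'
    (by positivity)).const_mul _

lemma integral_add_mul_sq_rpow (p : ℝ) {k m : ℝ} (hk : 0 < k) (hm : 0 < m) (c : ℝ) :
    ∫ t : ℝ, (k + m * (t - c) ^ 2) ^ p
      = k ^ (p + 1 / 2) * m ^ (-(1 / 2) : ℝ) * ∫ t : ℝ, (1 + t ^ 2) ^ p := by
  simp_rw [add_mul_sq_rpow_eq hk hm.le, integral_const_mul]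
  rw [Measure.integral_comp_mul_left (fun t => (1 + (t - √(m / k) * c) ^ 2) ^ p),
    integral_sub_right_eq_self (fun t : ℝ => (1 + t ^ 2) ^ p), smul_eq_mul,
    abs_of_pos (by positivity), sqrt_eq_rpow, ← rpow_neg (by positivity),
    div_rpow hm.le hk.le, rpow_neg hk.le, rpow_add hk]
  field_simp

lemma one_add_sq_div_four_rpow_le (t : ℝ) :
    (1 + t ^ 2 / 4) ^ (-(1 / 2) : ℝ) ≤ 2 * (1 + t ^ 2) ^ (-(1 / 2) : ℝ) := by
  calc (1 + t ^ 2 / 4) ^ (-(1 / 2) : ℝ) ≤ ((1 + t ^ 2) / 4) ^ (-(1 / 2) : ℝ) :=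
        rpow_le_rpow_of_nonpos (by positivity) (by linarith [sq_nonneg t]) (by norm_num)
    _ = 2 * (1 + t ^ 2) ^ (-(1 / 2) : ℝ) := by
        rw [div_rpow (by positivity) (by norm_num), div_eq_mul_inv, ← rpow_neg (by norm_num),
          neg_neg, show (4 : ℝ) = 2 ^ (2 : ℝ) by norm_num, ← rpow_mul (by norm_num)]
        norm_num
        ring

lemma integrable_one_add_sq_rpow_mul_rpow {p : ℝ} (hp : p < -(1 / 2)) :
    Integrable fun t : ℝ => (1 + t ^ 2) ^ (p + 1 / 2) * (1 + t ^ 2 / 4) ^ (-(1 / 2) : ℝ) := by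
  refine ((integrable_one_add_sq_rpow hp).const_mul 2).mono' (by fun_prop) (.of_forall fun t => ?_)
  rw [norm_of_nonneg (by positivity)]
  calc (1 + t ^ 2) ^ (p + 1 / 2) * (1 + t ^ 2 / 4) ^ (-(1 / 2) : ℝ)
      ≤ (1 + t ^ 2) ^ (p + 1 / 2) * (2 * (1 + t ^ 2) ^ (-(1 / 2) : ℝ)) := by
        gcongr; exact one_add_sq_div_four_rpow_le t
    _ = 2 * (1 + t ^ 2) ^ p := by
        rw [mul_left_comm, ← rpow_add (by positivity)]; ring_nf

lemma integrable_majorant_fst {a b : ℝ} (ha : a < -(1 / 2)) (hb : b < -(1 / 2)) :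
    Integrable fun u : ℝ × ℝ × ℝ =>
      (1 + u.2.1 ^ 2 + u.2.2 ^ 2) ^ a * (1 + (1 + u.2.1 ^ 2 / 4) * u.1 ^ 2) ^ b := by
  set Ka := ∫ t : ℝ, (1 + t ^ 2) ^ a
  set Kb := ∫ t : ℝ, (1 + t ^ 2) ^ b
  have hx (y : ℝ) : Integrable (fun x : ℝ => (1 + (1 + y ^ 2 / 4) * x ^ 2) ^ b) ∧
      ∫ x : ℝ, (1 + (1 + y ^ 2 / 4) * x ^ 2) ^ b = (1 + y ^ 2 / 4) ^ (-(1 / 2) : ℝ) * Kb := by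
    have hm : 0 < 1 + y ^ 2 / 4 := by positivity
    constructor
    · simpa using integrable_add_mul_sq_rpow hb one_pos hm 0
    · simpa using integral_add_mul_sq_rpow b one_pos hm 0
  have hz (y : ℝ) : Integrable (fun z : ℝ => (1 + y ^ 2 + z ^ 2) ^ a) ∧
      ∫ z : ℝ, (1 + y ^ 2 + z ^ 2) ^ a = (1 + y ^ 2) ^ (a + 1 / 2) * Ka := by
    have hk : 0 < 1 + y ^ 2 := by positivity
    constructor
    · simpa using integrable_add_mul_sq_rpow ha hk one_pos 0
    · simpa using integral_add_mul_sq_rpow a hk one_pos 0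
  have hyz : Integrable fun v : ℝ × ℝ =>
      (1 + v.1 ^ 2 + v.2 ^ 2) ^ a * ((1 + v.1 ^ 2 / 4) ^ (-(1 / 2) : ℝ) * Kb) := by
    rw [Measure.volume_eq_prod]
    refine integrable_prod_of_integral_eq (by fun_prop) (fun _ => by positivity)
      (g := fun y => (1 + y ^ 2) ^ (a + 1 / 2) * Ka * ((1 + y ^ 2 / 4) ^ (-(1 / 2) : ℝ) * Kb))
      (fun y => (hz y).1.mul_const ((1 + y ^ 2 / 4) ^ (-(1 / 2) : ℝ) * Kb))
      (fun y => by dsimp only; rw [integral_mul_const, (hz y).2]) ?_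
    exact ((integrable_one_add_sq_rpow_mul_rpow ha).mul_const (Ka * Kb)).congr
      (.of_forall fun y => by ring)
  rw [Measure.volume_eq_prod]
  exact integrable_prod_of_integral_eq' (by fun_prop) (fun _ => by positivity)
    (fun v => (hx v.1).1.const_mul ((1 + v.1 ^ 2 + v.2 ^ 2) ^ a))
    (fun v => by dsimp only; rw [integral_const_mul, (hx v.1).2]) hyz

lemma integrable_majorant_snd {a b : ℝ} (ha : a < -(1 / 2)) (hb : b < -(1 / 2)) :
    Integrable fun u : ℝ × ℝ × ℝ =>
      (1 + (1 + u.1 ^ 2 / 4) * u.2.1 ^ 2) ^ a * (1 + u.1 ^ 2 + (u.2.2 - u.1 * u.2.1) ^ 2) ^ b := by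
  set Ka := ∫ t : ℝ, (1 + t ^ 2) ^ a
  set Kb := ∫ t : ℝ, (1 + t ^ 2) ^ b
  have hy (x : ℝ) : Integrable (fun y : ℝ => (1 + (1 + x ^ 2 / 4) * y ^ 2) ^ a) ∧
      ∫ y : ℝ, (1 + (1 + x ^ 2 / 4) * y ^ 2) ^ a = (1 + x ^ 2 / 4) ^ (-(1 / 2) : ℝ) * Ka := by
    have hm : 0 < 1 + x ^ 2 / 4 := by positivity
    constructor
    · simpa using integrable_add_mul_sq_rpow ha one_pos hm 0
    · simpa using integral_add_mul_sq_rpow a one_pos hm 0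
  have hz (x y : ℝ) : Integrable (fun z : ℝ => (1 + x ^ 2 + (z - x * y) ^ 2) ^ b) ∧
      ∫ z : ℝ, (1 + x ^ 2 + (z - x * y) ^ 2) ^ b = (1 + x ^ 2) ^ (b + 1 / 2) * Kb := by
    have hk : 0 < 1 + x ^ 2 := by positivity
    constructor
    · simpa using integrable_add_mul_sq_rpow hb hk one_pos (x * y)
    · simpa using integral_add_mul_sq_rpow b hk one_pos (x * y)
  have hyz (x : ℝ) : Integrable (fun v : ℝ × ℝ => (1 + (1 + x ^ 2 / 4) * v.1 ^ 2) ^ a *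
        (1 + x ^ 2 + (v.2 - x * v.1) ^ 2) ^ b) ∧
      ∫ v : ℝ × ℝ, (1 + (1 + x ^ 2 / 4) * v.1 ^ 2) ^ a *
          (1 + x ^ 2 + (v.2 - x * v.1) ^ 2) ^ b
        = (1 + x ^ 2 / 4) ^ (-(1 / 2) : ℝ) * Ka * ((1 + x ^ 2) ^ (b + 1 / 2) * Kb) := by
    rw [Measure.volume_eq_prod, ← (hy x).2, ← integral_mul_const]
    have hmeas : AEStronglyMeasurable (fun v : ℝ × ℝ => (1 + (1 + x ^ 2 / 4) * v.1 ^ 2) ^ a *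
        (1 + x ^ 2 + (v.2 - x * v.1) ^ 2) ^ b) (volume.prod volume) := by fun_prop
    have hfib (y : ℝ) : ∫ z : ℝ, (1 + (1 + x ^ 2 / 4) * y ^ 2) ^ a *
        (1 + x ^ 2 + (z - x * y) ^ 2) ^ b
        = (1 + (1 + x ^ 2 / 4) * y ^ 2) ^ a * ((1 + x ^ 2) ^ (b + 1 / 2) * Kb) := by
      rw [integral_const_mul, (hz x y).2]
    have hsec (y : ℝ) := (hz x y).1.const_mul ((1 + (1 + x ^ 2 / 4) * y ^ 2) ^ a)
    have hg := (hy x).1.mul_const ((1 + x ^ 2) ^ (b + 1 / 2) * Kb)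
    exact ⟨integrable_prod_of_integral_eq hmeas (fun _ => by positivity) hsec hfib hg,
      integral_prod_of_integral_eq hmeas (fun _ => by positivity) hsec hfib hg⟩
  rw [Measure.volume_eq_prod]
  refine integrable_prod_of_integral_eq (by fun_prop) (fun _ => by positivity)
    (fun x => (hyz x).1) (fun x => (hyz x).2) ?_
  exact ((integrable_one_add_sq_rpow_mul_rpow hb).mul_const (Ka * Kb)).congr
    (.of_forall fun x => by ring)

lemma rpow_mul_rpow_le_majorant_add {a b : ℝ} (ha : a ≤ 0) (hb : b ≤ 0) (x y z : ℝ) :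
    (1 + y ^ 2 + z ^ 2) ^ a * (1 + x ^ 2 + (z - x * y) ^ 2) ^ b ≤
      (1 + y ^ 2 + z ^ 2) ^ a * (1 + (1 + y ^ 2 / 4) * x ^ 2) ^ b +
        (1 + (1 + x ^ 2 / 4) * y ^ 2) ^ a * (1 + x ^ 2 + (z - x * y) ^ 2) ^ b := by
  have hA : 0 ≤ (1 + y ^ 2 + z ^ 2) ^ a := by positivity
  have hB : 0 ≤ (1 + x ^ 2 + (z - x * y) ^ 2) ^ b := by positivity
  rcases le_or_gt ((x * y) ^ 2 / 4) (z ^ 2) with h | h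
  · have : (1 + y ^ 2 + z ^ 2) ^ a ≤ (1 + (1 + x ^ 2 / 4) * y ^ 2) ^ a :=
      rpow_le_rpow_of_nonpos (by positivity) (by nlinarith) ha
    exact (mul_le_mul_of_nonneg_right this hB).trans (le_add_of_nonneg_left (by positivity))
  · have : (1 + x ^ 2 + (z - x * y) ^ 2) ^ b ≤ (1 + (1 + y ^ 2 / 4) * x ^ 2) ^ b :=
      rpow_le_rpow_of_nonpos (by positivity) (by nlinarith [sq_nonneg (2 * z - x * y)]) hb
    exact (mul_le_mul_of_nonneg_left this hA).trans (le_add_of_nonneg_right (by positivity))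

/-- Absolute convergence of the spherical long-element Jacquet–Whittaker integral:
the integrand is Lebesgue integrable on ℝ³ when `Re μ₁ > Re μ₂ > Re μ₃`. -/
theorem stmt_13 (μ₁ μ₂ μ₃ : ℂ) (h12 : μ₂.re < μ₁.re) (h23 : μ₃.re < μ₂.re) :
    Integrable (fun u : ℝ × ℝ × ℝ =>
      ((1 + u.2.1 ^ 2 + u.2.2 ^ 2 : ℝ) : ℂ) ^ ((-1 + μ₃ - μ₂) / 2) *
        ((1 + u.1 ^ 2 + (u.2.2 - u.1 * u.2.1) ^ 2 : ℝ) : ℂ) ^ ((-1 + μ₂ - μ₁) / 2)) := by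
  have ha : ((-1 + μ₃ - μ₂) / 2).re < -(1 / 2) := by
    simp only [Complex.div_ofNat_re, Complex.sub_re, Complex.add_re, Complex.neg_re,
      Complex.one_re]
    linarith
  have hb : ((-1 + μ₂ - μ₁) / 2).re < -(1 / 2) := by
    simp only [Complex.div_ofNat_re, Complex.sub_re, Complex.add_re, Complex.neg_re,
      Complex.one_re]
    linarith
  refine ((integrable_majorant_fst ha hb).add (integrable_majorant_snd ha hb)).mono'
    (by fun_prop) (.of_forall fun ⟨x, y, z⟩ => ?_)
  rw [norm_mul, Complex.norm_cpow_eq_rpow_re_of_pos (by positivity),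
    Complex.norm_cpow_eq_rpow_re_of_pos (by positivity)]
  exact rpow_mul_rpow_le_majorant_add (by linarith) (by linarith) x y z
end

section
/- Let μ₁, μ₂, μ₃ be complex numbers with Re(μ₁) > Re(μ₂) > Re(μ₃), and let y₁, y₂ be real. Then ∫_{ℝ³} (1+u₂²+u₃²)^{(-1+μ₃-μ₂)/2} · (1+u₁²+(u₃-u₁u₂)²)^{(-1+μ₂-μ₁)/2} · e(-y₁u₁ - y₂u₂) du₁du₂du₃ = ∫_{ℝ³} (1+u₁²)^{(-1+μ₂-μ₁)/2} · (1+u₂²)^{(-1+μ₃-μ₂)/2} · (1+u₃²)^{(-1+μ₃-μ₁)/2} · e( -y₁u₁·√(1+u₃²)/√(1+u₂²) - y₁·u₂u₃/√(1+u₂²) - y₂u₂ ) du₁du₂du₃, and both integrals converge absolutely. -/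
/-!
Write `s = √(1 + u₂²)`, `t = √(1 + u₃²)` and `Φ(u) = ((t u₁ + u₂ u₃) / s, u₂, s u₃)`.
`Φ` is the substitution `u₃ ↦ s u₃` followed by `u₁ ↦ (t/s) u₁ + u₂ u₃ / s`; each is affine in one
coordinate with coefficients depending only on the other two, so by Fubini and the
one-dimensional change of variables `∫ F = ∫ t • F (Φ u)`, with integrability of the two sides
equivalent. Under `Φ` the quadratic forms of the first integrand factor as
`1 + u₂² + (s u₃)² = (1 + u₂²)(1 + u₃²)` and, with `v = (t u₁ + u₂ u₃) / s`,
`1 + v² + (s u₃ - v u₂)² = (1 + u₁²)(1 + u₃²)`,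
so `t • f (Φ u) = g u`. Finally `|g|` is a product of functions `(1 + x²) ^ r` with `r < -1/2`.
-/

open MeasureTheory

section FiberwiseAffine

variable {α E : Type*} [MeasurableSpace α] {μ : Measure α}
  [NormedAddCommGroup E] [NormedSpace ℝ E]

theorem integrable_smul_comp_mul_add_iff {a : ℝ} (ha : 0 < a) (b : ℝ) (F : ℝ → E) :
    Integrable (fun y => a • F (a * y + b)) ↔ Integrable F := by
  rw [show (fun y => a • F (a * y + b)) = a • fun y => F (a * y + b) from rfl,
    integrable_smul_iff ha.ne', integrable_comp_mul_left_iff (fun y => F (y + b)) ha.ne']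
  exact (measurePreserving_add_right volume b).integrable_comp_emb
    (MeasurableEquiv.addRight b).measurableEmbedding

theorem integral_smul_comp_mul_add {a : ℝ} (ha : 0 < a) (b : ℝ) (F : ℝ → E) :
    ∫ y, a • F (a * y + b) = ∫ y, F y := by
  rw [integral_smul, Measure.integral_comp_mul_left (fun y => F (y + b)),
    integral_add_right_eq_self, abs_of_pos (inv_pos.2 ha), smul_smul, mul_inv_cancel₀ ha.ne',
    one_smul]

variable {a b : α → ℝ} {F : α × ℝ → E}

theorem MeasureTheory.StronglyMeasurable.smul_comp_fiberwise_affine (ha : Measurable a)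
    (hb : Measurable b) (hF : StronglyMeasurable F) :
    StronglyMeasurable fun p : α × ℝ => a p.1 • F (p.1, a p.1 * p.2 + b p.1) :=
  (ha.comp measurable_fst).stronglyMeasurable.smul (hF.comp_measurable (by fun_prop))

theorem integrable_smul_comp_fiberwise_affine_iff (ha : Measurable a) (hb : Measurable b)
    (ha_pos : ∀ x, 0 < a x) (hF : StronglyMeasurable F) :
    Integrable (fun p : α × ℝ => a p.1 • F (p.1, a p.1 * p.2 + b p.1)) (μ.prod volume) ↔
      Integrable F (μ.prod volume) := by
  have hnorm (x : α) : ∫ y, ‖a x • F (x, a x * y + b x)‖ = ∫ y, ‖F (x, y)‖ := by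
    simp_rw [norm_smul, Real.norm_of_nonneg (ha_pos x).le, ← smul_eq_mul]
    exact integral_smul_comp_mul_add (ha_pos x) (b x) fun y => ‖F (x, y)‖
  rw [integrable_prod_iff (hF.smul_comp_fiberwise_affine ha hb).aestronglyMeasurable,
    integrable_prod_iff hF.aestronglyMeasurable]
  refine and_congr (Filter.eventually_congr (.of_forall fun x => ?_)) (by simp only [hnorm])
  exact integrable_smul_comp_mul_add_iff (ha_pos x) (b x) fun y => F (x, y)

theorem integral_smul_comp_fiberwise_affine [SFinite μ] (ha : Measurable a) (hb : Measurable b)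
    (ha_pos : ∀ x, 0 < a x) (hF : StronglyMeasurable F) :
    ∫ p, a p.1 • F (p.1, a p.1 * p.2 + b p.1) ∂(μ.prod volume) = ∫ p, F p ∂(μ.prod volume) := by
  by_cases hFi : Integrable F (μ.prod volume)
  · have hGi := (integrable_smul_comp_fiberwise_affine_iff ha hb ha_pos hF).2 hFi
    rw [integral_prod _ hGi, integral_prod _ hFi]
    congr 1 with x
    exact integral_smul_comp_mul_add (ha_pos x) (b x) fun y => F (x, y)
  · rw [integral_undef hFi, integral_undef
      (mt (integrable_smul_comp_fiberwise_affine_iff ha hb ha_pos hF).1 hFi)]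

end FiberwiseAffine

section AffineSubstitution

variable {E : Type*} [NormedAddCommGroup E] [NormedSpace ℝ E] {a b : ℝ × ℝ → ℝ}
  {F : ℝ × ℝ × ℝ → E}

theorem MeasureTheory.StronglyMeasurable.smul_comp_mul_last (ha : Measurable a)
    (hF : StronglyMeasurable F) :
    StronglyMeasurable fun u : ℝ × ℝ × ℝ =>
      a (u.1, u.2.1) • F (u.1, u.2.1, a (u.1, u.2.1) * u.2.2) :=
  (ha.comp (by fun_prop)).stronglyMeasurable.smul (hF.comp_measurable (by fun_prop))

theorem integrable_smul_comp_mul_last_iff (ha : Measurable a) (ha_pos : ∀ w, 0 < a w)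
    (hF : StronglyMeasurable F) :
    Integrable (fun u : ℝ × ℝ × ℝ => a (u.1, u.2.1) • F (u.1, u.2.1, a (u.1, u.2.1) * u.2.2)) ↔
      Integrable F := by
  have hassoc := volume_preserving_prodAssoc (α₁ := ℝ) (β₁ := ℝ) (γ₁ := ℝ)
  rw [← hassoc.integrable_comp_emb MeasurableEquiv.prodAssoc.measurableEmbedding,
    ← hassoc.integrable_comp_emb MeasurableEquiv.prodAssoc.measurableEmbedding]
  have h := integrable_smul_comp_fiberwise_affine_iff (μ := volume) (b := 0) ha
    measurable_const ha_pos (hF.comp_measurable MeasurableEquiv.prodAssoc.measurable)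
  simp only [Pi.zero_apply, add_zero] at h
  exact h

theorem integral_smul_comp_mul_last (ha : Measurable a) (ha_pos : ∀ w, 0 < a w)
    (hF : StronglyMeasurable F) :
    ∫ u : ℝ × ℝ × ℝ, a (u.1, u.2.1) • F (u.1, u.2.1, a (u.1, u.2.1) * u.2.2) = ∫ u, F u := by
  have hassoc := volume_preserving_prodAssoc (α₁ := ℝ) (β₁ := ℝ) (γ₁ := ℝ)
  refine (hassoc.integral_comp' _).symm.trans (.trans ?_ (hassoc.integral_comp' F))
  have h := integral_smul_comp_fiberwise_affine (μ := volume) (b := 0) ha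
    measurable_const ha_pos (hF.comp_measurable MeasurableEquiv.prodAssoc.measurable)
  simp only [Pi.zero_apply, add_zero] at h
  exact h

theorem integrable_smul_comp_affine_first_iff (ha : Measurable a) (hb : Measurable b)
    (ha_pos : ∀ w, 0 < a w) (hF : StronglyMeasurable F) :
    Integrable (fun u : ℝ × ℝ × ℝ => a u.2 • F (a u.2 * u.1 + b u.2, u.2)) ↔ Integrable F := by
  rw [Measure.volume_eq_prod, ← integrable_swap_iff, ← integrable_swap_iff (f := F)]
  exact integrable_smul_comp_fiberwise_affine_iff ha hb ha_pos
    (hF.comp_measurable measurable_swap)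

theorem integral_smul_comp_affine_first (ha : Measurable a) (hb : Measurable b)
    (ha_pos : ∀ w, 0 < a w) (hF : StronglyMeasurable F) :
    ∫ u : ℝ × ℝ × ℝ, a u.2 • F (a u.2 * u.1 + b u.2, u.2) = ∫ u, F u := by
  rw [Measure.volume_eq_prod]
  refine (integral_prod_swap _).symm.trans (.trans ?_ (integral_prod_swap F))
  exact integral_smul_comp_fiberwise_affine ha hb ha_pos (hF.comp_measurable measurable_swap)

end AffineSubstitution

noncomputable def whittakerSubst (u : ℝ × ℝ × ℝ) : ℝ × ℝ × ℝ :=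
  ((√(1 + u.2.2 ^ 2) * u.1 + u.2.1 * u.2.2) / √(1 + u.2.1 ^ 2), u.2.1, √(1 + u.2.1 ^ 2) * u.2.2)

section WhittakerSubst

variable {E : Type*} [NormedAddCommGroup E] [NormedSpace ℝ E]

theorem sqrt_smul_comp_whittakerSubst (F : ℝ × ℝ × ℝ → E) (u : ℝ × ℝ × ℝ) :
    √(1 + u.2.2 ^ 2) • F (whittakerSubst u) =
      (√(1 + u.2.2 ^ 2) / √(1 + u.2.1 ^ 2)) • √(1 + u.2.1 ^ 2) •
        F (√(1 + u.2.2 ^ 2) / √(1 + u.2.1 ^ 2) * u.1 + u.2.1 * u.2.2 / √(1 + u.2.1 ^ 2), u.2.1,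
          √(1 + u.2.1 ^ 2) * u.2.2) := by
  have hs : √(1 + u.2.1 ^ 2) ≠ 0 := by positivity
  rw [smul_smul, div_mul_cancel₀ _ hs, whittakerSubst, add_div, mul_div_right_comm]

variable {F : ℝ × ℝ × ℝ → E}

theorem integrable_sqrt_smul_comp_whittakerSubst_iff (hF : StronglyMeasurable F) :
    Integrable (fun u => √(1 + u.2.2 ^ 2) • F (whittakerSubst u)) ↔ Integrable F := by
  simp_rw [sqrt_smul_comp_whittakerSubst F]
  exact (integrable_smul_comp_affine_first_iff
    (a := fun w => √(1 + w.2 ^ 2) / √(1 + w.1 ^ 2)) (b := fun w => w.1 * w.2 / √(1 + w.1 ^ 2))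
    (by fun_prop) (by fun_prop) (fun _ => by positivity)
    (hF.smul_comp_mul_last (a := fun w => √(1 + w.2 ^ 2)) (by fun_prop))).trans
    (integrable_smul_comp_mul_last_iff (a := fun w => √(1 + w.2 ^ 2)) (by fun_prop)
      (fun _ => by positivity) hF)

theorem integral_sqrt_smul_comp_whittakerSubst (hF : StronglyMeasurable F) :
    ∫ u, √(1 + u.2.2 ^ 2) • F (whittakerSubst u) = ∫ u, F u := by
  simp_rw [sqrt_smul_comp_whittakerSubst F]
  exact (integral_smul_comp_affine_first
    (a := fun w => √(1 + w.2 ^ 2) / √(1 + w.1 ^ 2)) (b := fun w => w.1 * w.2 / √(1 + w.1 ^ 2))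
    (by fun_prop) (by fun_prop) (fun _ => by positivity)
    (hF.smul_comp_mul_last (a := fun w => √(1 + w.2 ^ 2)) (by fun_prop))).trans
    (integral_smul_comp_mul_last (a := fun w => √(1 + w.2 ^ 2)) (by fun_prop)
      (fun _ => by positivity) hF)

end WhittakerSubst

noncomputable def whittakerIntegrand (μ₁ μ₂ μ₃ : ℂ) (y₁ y₂ : ℝ) (u : ℝ × ℝ × ℝ) : ℂ :=
  ((1 + u.2.1 ^ 2 + u.2.2 ^ 2 : ℝ) : ℂ) ^ ((-1 + μ₃ - μ₂) / 2) *
    ((1 + u.1 ^ 2 + (u.2.2 - u.1 * u.2.1) ^ 2 : ℝ) : ℂ) ^ ((-1 + μ₂ - μ₁) / 2) *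
    Complex.exp (2 * (Real.pi : ℂ) * Complex.I * ((-y₁ * u.1 - y₂ * u.2.1 : ℝ) : ℂ))

noncomputable def substWhittakerIntegrand (μ₁ μ₂ μ₃ : ℂ) (y₁ y₂ : ℝ) (u : ℝ × ℝ × ℝ) : ℂ :=
  ((1 + u.1 ^ 2 : ℝ) : ℂ) ^ ((-1 + μ₂ - μ₁) / 2) *
    ((1 + u.2.1 ^ 2 : ℝ) : ℂ) ^ ((-1 + μ₃ - μ₂) / 2) *
    ((1 + u.2.2 ^ 2 : ℝ) : ℂ) ^ ((-1 + μ₃ - μ₁) / 2) *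
    Complex.exp (2 * (Real.pi : ℂ) * Complex.I *
      ((-y₁ * u.1 * Real.sqrt (1 + u.2.2 ^ 2) / Real.sqrt (1 + u.2.1 ^ 2) -
        y₁ * u.2.1 * u.2.2 / Real.sqrt (1 + u.2.1 ^ 2) - y₂ * u.2.1 : ℝ) : ℂ))

theorem measurable_whittakerIntegrand (μ₁ μ₂ μ₃ : ℂ) (y₁ y₂ : ℝ) :
    Measurable (whittakerIntegrand μ₁ μ₂ μ₃ y₁ y₂) := by
  unfold whittakerIntegrand; fun_prop

theorem measurable_substWhittakerIntegrand (μ₁ μ₂ μ₃ : ℂ) (y₁ y₂ : ℝ) :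
    Measurable (substWhittakerIntegrand μ₁ μ₂ μ₃ y₁ y₂) := by
  unfold substWhittakerIntegrand; fun_prop

theorem one_add_sq_add_sq_sqrt_mul (x z : ℝ) :
    1 + x ^ 2 + (√(1 + x ^ 2) * z) ^ 2 = (1 + x ^ 2) * (1 + z ^ 2) := by
  rw [mul_pow, Real.sq_sqrt (by positivity)]; ring

theorem one_add_sq_add_sq_whittakerSubst (w x z : ℝ) :
    1 + ((√(1 + z ^ 2) * w + x * z) / √(1 + x ^ 2)) ^ 2 +
        (√(1 + x ^ 2) * z - (√(1 + z ^ 2) * w + x * z) / √(1 + x ^ 2) * x) ^ 2 =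
      (1 + w ^ 2) * (1 + z ^ 2) := by
  have hs : √(1 + x ^ 2) ≠ 0 := by positivity
  have hs2 : √(1 + x ^ 2) ^ 2 = 1 + x ^ 2 := Real.sq_sqrt (by positivity)
  have ht2 : √(1 + z ^ 2) ^ 2 = 1 + z ^ 2 := Real.sq_sqrt (by positivity)
  have hsub : √(1 + x ^ 2) * z - (√(1 + z ^ 2) * w + x * z) / √(1 + x ^ 2) * x =
      (z - √(1 + z ^ 2) * w * x) / √(1 + x ^ 2) := by
    field_simp
    linear_combination z * hs2
  rw [hsub, div_pow, div_pow, hs2]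
  field_simp
  linear_combination (1 + x ^ 2) * w ^ 2 * ht2

theorem ofReal_sqrt_mul_cpow_mul_cpow {x : ℝ} (hx : 0 < x) (p q : ℂ) :
    (√x : ℂ) * (x : ℂ) ^ p * (x : ℂ) ^ q = (x : ℂ) ^ (p + q + 1 / 2) := by
  have hx' : (x : ℂ) ≠ 0 := by exact_mod_cast hx.ne'
  rw [Real.sqrt_eq_rpow, Complex.ofReal_cpow hx.le, ← Complex.cpow_add _ _ hx',
    ← Complex.cpow_add _ _ hx']
  push_cast; ring_nf

theorem sqrt_smul_whittakerIntegrand_whittakerSubst (μ₁ μ₂ μ₃ : ℂ) (y₁ y₂ : ℝ)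
    (u : ℝ × ℝ × ℝ) :
    √(1 + u.2.2 ^ 2) • whittakerIntegrand μ₁ μ₂ μ₃ y₁ y₂ (whittakerSubst u) =
      substWhittakerIntegrand μ₁ μ₂ μ₃ y₁ y₂ u := by
  obtain ⟨w, x, z⟩ := u
  simp only [whittakerIntegrand, substWhittakerIntegrand, whittakerSubst]
  rw [one_add_sq_add_sq_sqrt_mul, one_add_sq_add_sq_whittakerSubst, Complex.ofReal_mul,
    Complex.ofReal_mul, Complex.mul_cpow_ofReal_nonneg (by positivity) (by positivity),
    Complex.mul_cpow_ofReal_nonneg (by positivity) (by positivity),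
    show (-1 + μ₃ - μ₁) / 2 = (-1 + μ₃ - μ₂) / 2 + (-1 + μ₂ - μ₁) / 2 + 1 / 2 by ring,
    ← ofReal_sqrt_mul_cpow_mul_cpow (by positivity), Complex.real_smul,
    show -y₁ * ((√(1 + z ^ 2) * w + x * z) / √(1 + x ^ 2)) - y₂ * x =
      -y₁ * w * √(1 + z ^ 2) / √(1 + x ^ 2) - y₁ * x * z / √(1 + x ^ 2) - y₂ * x by ring]
  ring

theorem norm_exp_two_pi_I_mul_ofReal (x : ℝ) :
    ‖Complex.exp (2 * Real.pi * Complex.I * x)‖ = 1 := by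
  rw [Complex.norm_exp]; simp

theorem integrable_one_add_sq_rpow_s14 {r : ℝ} (hr : r < -1 / 2) :
    Integrable fun x : ℝ => (1 + x ^ 2) ^ r := by
  have h := integrable_rpow_neg_one_add_norm_sq (E := ℝ) (μ := volume) (r := -2 * r)
    (by simp only [Module.finrank_self, Nat.cast_one]; linarith)
  simpa only [Real.norm_eq_abs, sq_abs, neg_mul, neg_neg, mul_div_cancel_left₀ r two_ne_zero]
    using h

theorem norm_substWhittakerIntegrand (μ₁ μ₂ μ₃ : ℂ) (y₁ y₂ : ℝ) (u : ℝ × ℝ × ℝ) :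
    ‖substWhittakerIntegrand μ₁ μ₂ μ₃ y₁ y₂ u‖ =
      (1 + u.1 ^ 2) ^ ((-1 + μ₂.re - μ₁.re) / 2) *
        ((1 + u.2.1 ^ 2) ^ ((-1 + μ₃.re - μ₂.re) / 2) *
          (1 + u.2.2 ^ 2) ^ ((-1 + μ₃.re - μ₁.re) / 2)) := by
  have hre (ν ν' : ℂ) : ((-1 + ν - ν') / 2).re = (-1 + ν.re - ν'.re) / 2 := by simp
  simp only [substWhittakerIntegrand, norm_mul, norm_exp_two_pi_I_mul_ofReal, hre,
    Complex.norm_cpow_eq_rpow_re_of_pos (by positivity : (0 : ℝ) < 1 + _ ^ 2)]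
  ring

theorem integrable_substWhittakerIntegrand {μ₁ μ₂ μ₃ : ℂ} (h12 : μ₂.re < μ₁.re)
    (h23 : μ₃.re < μ₂.re) (y₁ y₂ : ℝ) :
    Integrable (substWhittakerIntegrand μ₁ μ₂ μ₃ y₁ y₂) := by
  have hbound :=
    (integrable_one_add_sq_rpow_s14 (r := (-1 + μ₂.re - μ₁.re) / 2) (by linarith)).mul_prod
      ((integrable_one_add_sq_rpow_s14 (r := (-1 + μ₃.re - μ₂.re) / 2) (by linarith)).mul_prod
        (integrable_one_add_sq_rpow_s14 (r := (-1 + μ₃.re - μ₁.re) / 2) (by linarith)))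
  exact hbound.mono' (measurable_substWhittakerIntegrand μ₁ μ₂ μ₃ y₁ y₂).aestronglyMeasurable
    (.of_forall fun u => (norm_substWhittakerIntegrand μ₁ μ₂ μ₃ y₁ y₂ u).le)

/-- The substituted form of the spherical long-element Jacquet–Whittaker integral:
both triple integrals converge absolutely and are equal, for `Re μ₁ > Re μ₂ > Re μ₃`.
Here `u = (u₁, u₂, u₃)` and `e(t) = exp(2πit)`. -/
theorem stmt_14 (μ₁ μ₂ μ₃ : ℂ) (h12 : μ₂.re < μ₁.re) (h23 : μ₃.re < μ₂.re) (y₁ y₂ : ℝ) :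
    let f : ℝ × ℝ × ℝ → ℂ := fun u =>
      ((1 + u.2.1 ^ 2 + u.2.2 ^ 2 : ℝ) : ℂ) ^ ((-1 + μ₃ - μ₂) / 2) *
        ((1 + u.1 ^ 2 + (u.2.2 - u.1 * u.2.1) ^ 2 : ℝ) : ℂ) ^ ((-1 + μ₂ - μ₁) / 2) *
        Complex.exp (2 * (Real.pi : ℂ) * Complex.I * ((-y₁ * u.1 - y₂ * u.2.1 : ℝ) : ℂ))
    let g : ℝ × ℝ × ℝ → ℂ := fun u =>
      ((1 + u.1 ^ 2 : ℝ) : ℂ) ^ ((-1 + μ₂ - μ₁) / 2) *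
        ((1 + u.2.1 ^ 2 : ℝ) : ℂ) ^ ((-1 + μ₃ - μ₂) / 2) *
        ((1 + u.2.2 ^ 2 : ℝ) : ℂ) ^ ((-1 + μ₃ - μ₁) / 2) *
        Complex.exp (2 * (Real.pi : ℂ) * Complex.I *
          ((-y₁ * u.1 * Real.sqrt (1 + u.2.2 ^ 2) / Real.sqrt (1 + u.2.1 ^ 2) -
            y₁ * u.2.1 * u.2.2 / Real.sqrt (1 + u.2.1 ^ 2) - y₂ * u.2.1 : ℝ) : ℂ))
    Integrable f ∧ Integrable g ∧ (∫ u : ℝ × ℝ × ℝ, f u) = ∫ u : ℝ × ℝ × ℝ, g u := by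
  intro f g
  have hf : StronglyMeasurable f :=
    (measurable_whittakerIntegrand μ₁ μ₂ μ₃ y₁ y₂).stronglyMeasurable
  have hfg : (fun u => √(1 + u.2.2 ^ 2) • f (whittakerSubst u)) = g :=
    funext (sqrt_smul_whittakerIntegrand_whittakerSubst μ₁ μ₂ μ₃ y₁ y₂)
  have hg : Integrable g := integrable_substWhittakerIntegrand h12 h23 y₁ y₂
  refine ⟨(integrable_sqrt_smul_comp_whittakerSubst_iff hf).1 (hfg ▸ hg), hg, ?_⟩
  rw [← integral_sqrt_smul_comp_whittakerSubst hf, hfg]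
end
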